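/- arXiv:2106.02002 — 10 statements merged into one kernel-verified Lean document; each statement's English description precedes it below -/
import Mathlib

section
/- For every positive integer n, (1/2)·L(n)·T(2n) < e·(n!)^(1/n) < (1/2)·R(n)·T(2n). (This is an equivalent formulation of Robbins's improvement of Stirling's approximation √(2π)·n^(n+1/2)·e^(−n)·e^(1/(12n+1)) < n! < √(2π)·n^(n+1/2)·e^(−n)·e^(1/(12n)).) -/
/-!
With `stirlingSeq n = n! / (√(2n) (n/e)^n)` one has `e (n!)^(1/n) = (1/2) stirlingSeq(n)^(1/n) T(2n)`,
`L n = (√π e^(1/(12n+1)))^(1/n)` and `R n = (√π e^(1/(12n)))^(1/n)`, so the claim is the `n`-th root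
of Robbins's bounds `√π e^(1/(12n+1)) < stirlingSeq n < √π e^(1/(12n))`.

The difference `log (stirlingSeq n) - log (stirlingSeq (n+1))` equals `∑_{k ≥ 1} r^k / (2k+1)` with
`r = (2n+1)⁻²`. Its first term `r/3` bounds it below by `1/(12n+1) - 1/(12(n+1)+1)`, and the geometric
series `∑ r^k / 3` bounds it above by `1/(12n) - 1/(12(n+1))`. Since `log (stirlingSeq n) → log √π`,
these telescope to Robbins's bounds.
-/

open Real Filter Nat

noncomputable def L (x : ℝ) : ℝ := Real.pi ^ (1 / (2 * x)) * Real.exp (1 / ((12 * x + 1) * x))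

noncomputable def R (x : ℝ) : ℝ := Real.pi ^ (1 / (2 * x)) * Real.exp (1 / (12 * x ^ 2))

noncomputable def T (x : ℝ) : ℝ := x * x ^ (1 / x)

open Topology Stirling

theorem lt_of_tendsto_of_forall_lt_succ {α : Type*} [TopologicalSpace α] [Preorder α]
    [OrderClosedTopology α] {v : ℕ → α} {c : α} (hv : Tendsto v atTop (𝓝 c)) {n : ℕ}
    (hstep : ∀ k, n ≤ k → v k < v (k + 1)) : v n < c := by
  have hmono : Monotone fun k => v (k + n) :=
    monotone_nat_of_le_succ fun k => by simpa [add_right_comm] using (hstep (k + n) (by omega)).le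
  calc v n < v (n + 1) := hstep n le_rfl
    _ = v (1 + n) := by rw [add_comm]
    _ ≤ c := hmono.ge_of_tendsto ((tendsto_add_atTop_iff_nat n).2 hv) 1

theorem tendsto_one_div_twelve_mul_add (c : ℝ) :
    Tendsto (fun n : ℕ => 1 / (12 * (n : ℝ) + c)) atTop (𝓝 0) :=
  tendsto_const_nhds.div_atTop <| tendsto_atTop_add_const_right _ _ <|
    tendsto_natCast_atTop_atTop.const_mul_atTop (by norm_num)

theorem tendsto_log_stirlingSeq : Tendsto (fun n => log (stirlingSeq n)) atTop (𝓝 (log √π)) :=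
  ((continuousAt_log (by positivity)).tendsto).comp tendsto_stirlingSeq_sqrt_pi

theorem stirlingSeq_pos {n : ℕ} (hn : n ≠ 0) : 0 < stirlingSeq n := by
  obtain ⟨m, rfl⟩ := exists_eq_succ_of_ne_zero hn
  exact stirlingSeq'_pos m

theorem lt_log_stirlingSeq_sdiff {n : ℕ} (hn : n ≠ 0) :
    1 / (12 * (n : ℝ) + 1) - 1 / (12 * ((n + 1 : ℕ) : ℝ) + 1) <
      log (stirlingSeq n) - log (stirlingSeq (n + 1)) := by
  obtain ⟨m, rfl⟩ := exists_eq_succ_of_ne_zero hn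
  have hsum := log_stirlingSeq_sdiff_hasSum m
  have hfirst := le_hasSum hsum 0 fun j _ => by positivity
  refine lt_of_lt_of_le ?_ hfirst
  have hx : (1 : ℝ) ≤ ((m + 1 : ℕ) : ℝ) := by exact_mod_cast Nat.succ_pos m
  push_cast at hx ⊢
  rw [div_sub_div _ _ (by positivity) (by positivity), div_lt_iff₀ (by positivity)]
  field_simp
  nlinarith

theorem log_stirlingSeq_sdiff_lt {n : ℕ} (hn : n ≠ 0) :
    log (stirlingSeq n) - log (stirlingSeq (n + 1)) <
      1 / (12 * (n : ℝ)) - 1 / (12 * ((n + 1 : ℕ) : ℝ)) := by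
  obtain ⟨m, rfl⟩ := exists_eq_succ_of_ne_zero hn
  set r : ℝ := (1 / (2 * ((m + 1 : ℕ) : ℝ) + 1)) ^ 2 with hr
  have hr1 : r < 1 := by
    rw [hr, div_pow, one_pow, div_lt_one (by positivity)]
    push_cast; nlinarith [(m.cast_nonneg : (0 : ℝ) ≤ m)]
  have hgeom := (hasSum_geometric_of_lt_one (by positivity) hr1).mul_left (r / 3)
  refine lt_of_lt_of_eq (hasSum_lt (i := 1) (fun j => ?_) ?_ (log_stirlingSeq_sdiff_hasSum m) hgeom) ?_
  · rw [← hr]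
    calc _ = 1 / (2 * ((j + 1 : ℕ) : ℝ) + 1) * r * r ^ j := by ring
      _ ≤ 1 / 3 * r * r ^ j := by gcongr; push_cast; linarith [(j.cast_nonneg : (0 : ℝ) ≤ j)]
      _ = _ := by ring
  · rw [← hr]
    have : 0 < r := by positivity
    norm_num
    nlinarith
  · have h1r : 1 - r = 4 * ((m : ℝ) + 1) * ((m : ℝ) + 2) / (2 * ((m : ℝ) + 1) + 1) ^ 2 := by
      rw [hr]; push_cast; field_simp; ring
    rw [h1r, hr]
    push_cast
    field_simp
    ring

theorem sqrt_pi_mul_exp_lt_stirlingSeq {n : ℕ} (hn : n ≠ 0) :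
    √π * exp (1 / (12 * n + 1)) < stirlingSeq n := by
  rw [← log_lt_log_iff (by positivity) (stirlingSeq_pos hn), log_mul (by positivity) (by positivity),
    log_exp]
  have := lt_of_tendsto_of_forall_lt_succ
    ((tendsto_one_div_twelve_mul_add 1).sub tendsto_log_stirlingSeq) (n := n) fun k hk => by
      have := lt_log_stirlingSeq_sdiff (n := k) (by omega)
      push_cast at this ⊢
      linarith
  linarith

theorem stirlingSeq_lt_sqrt_pi_mul_exp {n : ℕ} (hn : n ≠ 0) :
    stirlingSeq n < √π * exp (1 / (12 * n)) := by
  rw [← log_lt_log_iff (stirlingSeq_pos hn) (by positivity), log_mul (by positivity) (by positivity),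
    log_exp]
  have h0 : Tendsto (fun k : ℕ => 1 / (12 * (k : ℝ))) atTop (𝓝 0) := by
    simpa using tendsto_one_div_twelve_mul_add 0
  have := lt_of_tendsto_of_forall_lt_succ (tendsto_log_stirlingSeq.sub h0) (n := n)
    fun k hk => by
      have := log_stirlingSeq_sdiff_lt (n := k) (by omega)
      push_cast at this ⊢
      linarith
  rw [sub_zero] at this
  linarith

theorem L_eq_rpow (x : ℝ) : L x = (√π * exp (1 / (12 * x + 1))) ^ (1 / x) := by
  rw [L, mul_rpow (by positivity) (by positivity), sqrt_eq_rpow, ← rpow_mul pi_pos.le, ← exp_mul]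
  congr 2
  · ring
  · rw [one_div_mul_one_div]

theorem R_eq_rpow (x : ℝ) : R x = (√π * exp (1 / (12 * x))) ^ (1 / x) := by
  rw [R, mul_rpow (by positivity) (by positivity), sqrt_eq_rpow, ← rpow_mul pi_pos.le, ← exp_mul]
  congr 2
  · ring
  · rw [one_div_mul_one_div]; ring

theorem exp_one_mul_factorial_rpow {n : ℕ} (hn : n ≠ 0) :
    exp 1 * (n ! : ℝ) ^ (1 / (n : ℝ)) = 1 / 2 * stirlingSeq n ^ (1 / (n : ℝ)) * T (2 * n) := by
  have hfac : (n ! : ℝ) = stirlingSeq n * (√(2 * n) * (n / exp 1) ^ n) := by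
    rw [stirlingSeq, div_mul_cancel₀ _ (by positivity)]
  rw [hfac, T, mul_rpow (stirlingSeq_pos hn).le (by positivity),
    mul_rpow (by positivity) (by positivity), sqrt_eq_rpow, ← rpow_mul (by positivity), one_div (n : ℝ),
    pow_rpow_inv_natCast (by positivity) hn]
  field_simp

/-- Robbins's improvement of Stirling's approximation, reformulated:
`(1/2)·L(n)·T(2n) < e·(n!)^(1/n) < (1/2)·R(n)·T(2n)` for all `n ≥ 1`. -/
theorem robbins_reformulated (n : ℕ) (hn : 1 ≤ n) :
    (1 / 2) * L n * T (2 * n) < Real.exp 1 * (n ! : ℝ) ^ (1 / (n : ℝ)) ∧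
    Real.exp 1 * (n ! : ℝ) ^ (1 / (n : ℝ)) < (1 / 2) * R n * T (2 * n) := by
  have hn0 : n ≠ 0 := by omega
  have hT : 0 < T (2 * n) := by unfold T; positivity
  have hs := stirlingSeq_pos hn0
  rw [exp_one_mul_factorial_rpow hn0, L_eq_rpow, R_eq_rpow]
  constructor
  · gcongr
    exact sqrt_pi_mul_exp_lt_stirlingSeq hn0
  · gcongr
    exact stirlingSeq_lt_sqrt_pi_mul_exp hn0
end

section
/- For all real x > 0 and all real y ≥ x + 1/24, R(y) < L(x). Moreover, for all x > 0 one has 1 < L(x) < R(x). -/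
open Real

/-- For all `x > 0` and all `y ≥ x + 1/24`, `R(y) < L(x)`; moreover `1 < L(x) < R(x)`. -/
theorem R_lt_L_and_one_lt_L_lt_R (x : ℝ) (hx : 0 < x) :
    (∀ y : ℝ, x + 1 / 24 ≤ y → R y < L x) ∧ 1 < L x ∧ L x < R x := by
  have hpi : (1:ℝ) < Real.pi := by have := Real.pi_gt_three; linarith
  have hqx : 0 < (12 * x + 1) * x := by nlinarith
  refine ⟨?_, ?_, ?_⟩
  · intro y hy
    have hy0 : 0 < y := by linarith
    have h1 : Real.pi ^ (1 / (2 * y)) ≤ Real.pi ^ (1 / (2 * x)) := by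
      apply Real.rpow_le_rpow_left_iff hpi |>.mpr
      apply div_le_div_of_nonneg_left one_pos.le (by linarith) (by linarith)
    have h2 : Real.exp (1 / (12 * y ^ 2)) < Real.exp (1 / ((12 * x + 1) * x)) := by
      apply Real.exp_lt_exp.mpr
      apply div_lt_div_of_pos_left one_pos hqx
      nlinarith
    have hA : (0:ℝ) < Real.pi ^ (1 / (2 * x)) := Real.rpow_pos_of_pos (by linarith) _
    calc R y = Real.pi ^ (1 / (2 * y)) * Real.exp (1 / (12 * y ^ 2)) := rfl
      _ < Real.pi ^ (1 / (2 * x)) * Real.exp (1 / ((12 * x + 1) * x)) :=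
          mul_lt_mul' h1 h2 (Real.exp_pos _).le hA
      _ = L x := rfl
  · have h1 : (1:ℝ) < Real.pi ^ (1 / (2 * x)) :=
      Real.one_lt_rpow_iff_of_pos (by linarith) |>.mpr (Or.inl ⟨hpi, by positivity⟩)
    have h2 : (1:ℝ) < Real.exp (1 / ((12 * x + 1) * x)) := by
      rw [← Real.exp_zero]; exact Real.exp_lt_exp.mpr (by positivity)
    calc (1:ℝ) = 1 * 1 := by ring
      _ < Real.pi ^ (1 / (2 * x)) * Real.exp (1 / ((12 * x + 1) * x)) :=
          mul_lt_mul'' h1 h2 one_pos.le one_pos.le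
      _ = L x := rfl
  · have hA : (0:ℝ) < Real.pi ^ (1 / (2 * x)) := Real.rpow_pos_of_pos (by linarith) _
    have h2 : Real.exp (1 / ((12 * x + 1) * x)) < Real.exp (1 / (12 * x ^ 2)) := by
      apply Real.exp_lt_exp.mpr
      apply div_lt_div_of_pos_left one_pos (by positivity)
      nlinarith
    exact mul_lt_mul_of_pos_left h2 hA
end

section
/- For all real x ≥ 8.0845 one has 1 + (ln x)/(x − 1) < x^(1/x), and for all real x ≥ 6.7537 one has x^(1/x) < (x + 1)/(x + 1 − ln x). -/
open Real

set_option maxHeartbeats 4000000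


lemma log_lb1 : (2.0899486:ℝ) ≤ Real.log 8.0845 := by
  rw [Real.le_log_iff_exp_le (by norm_num : (0:ℝ) < 8.0845)]
  have h4 : Real.exp (2.0899486/4) ≤ (33724326231:ℝ)/20000000000 := by
    calc Real.exp (2.0899486/4)
        ≤ (∑ m ∈ Finset.range 10, (2.0899486/4:ℝ) ^ m / m.factorial) +
          (2.0899486/4:ℝ) ^ 10 * (10 + 1) / (Nat.factorial 10 * 10) :=
          Real.exp_bound' (by norm_num) (by norm_num) (by norm_num)
      _ ≤ (33724326231:ℝ)/20000000000 := by
          norm_num [Finset.sum_range_succ, Nat.factorial]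
  calc Real.exp 2.0899486 = Real.exp (2.0899486/4) ^ (4:ℕ) := by
        rw [← Real.exp_nat_mul]; norm_num
    _ ≤ ((33724326231:ℝ)/20000000000) ^ (4:ℕ) :=
        pow_le_pow_left₀ (Real.exp_pos _).le h4 4
    _ ≤ 8.0845 := by norm_num

lemma log_ub1 : Real.log 8.0845 ≤ (2.0899487:ℝ) := by
  rw [Real.log_le_iff_le_exp (by norm_num : (0:ℝ) < 8.0845)]
  have h4 : (33724327073:ℝ)/20000000000 ≤ Real.exp (2.0899487/4) := by
    calc (33724327073:ℝ)/20000000000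
        ≤ (∑ m ∈ Finset.range 11, (2.0899487/4:ℝ) ^ m / m.factorial) := by
          norm_num [Finset.sum_range_succ, Nat.factorial]
      _ ≤ Real.exp (2.0899487/4) := Real.sum_le_exp_of_nonneg (by norm_num) 11
  calc (8.0845:ℝ) ≤ ((33724327073:ℝ)/20000000000) ^ (4:ℕ) := by norm_num
    _ ≤ Real.exp (2.0899487/4) ^ (4:ℕ) := pow_le_pow_left₀ (by norm_num) h4 4
    _ = Real.exp 2.0899487 := by rw [← Real.exp_nat_mul]; norm_num

lemma log_lb2 : (1.9100905:ℝ) ≤ Real.log 6.7537 := by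
  rw [Real.le_log_iff_exp_le (by norm_num : (0:ℝ) < 6.7537)]
  have h4 : Real.exp (1.9100905/4) ≤ (161207573503:ℝ)/100000000000 := by
    calc Real.exp (1.9100905/4)
        ≤ (∑ m ∈ Finset.range 10, (1.9100905/4:ℝ) ^ m / m.factorial) +
          (1.9100905/4:ℝ) ^ 10 * (10 + 1) / (Nat.factorial 10 * 10) :=
          Real.exp_bound' (by norm_num) (by norm_num) (by norm_num)
      _ ≤ (161207573503:ℝ)/100000000000 := by
          norm_num [Finset.sum_range_succ, Nat.factorial]
  calc Real.exp 1.9100905 = Real.exp (1.9100905/4) ^ (4:ℕ) := by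
        rw [← Real.exp_nat_mul]; norm_num
    _ ≤ ((161207573503:ℝ)/100000000000) ^ (4:ℕ) :=
        pow_le_pow_left₀ (Real.exp_pos _).le h4 4
    _ ≤ 6.7537 := by norm_num

lemma log_ub2 : Real.log 6.7537 ≤ (1.9100906:ℝ) := by
  rw [Real.log_le_iff_le_exp (by norm_num : (0:ℝ) < 6.7537)]
  have h4 : (16120757753:ℝ)/10000000000 ≤ Real.exp (1.9100906/4) := by
    calc (16120757753:ℝ)/10000000000
        ≤ (∑ m ∈ Finset.range 11, (1.9100906/4:ℝ) ^ m / m.factorial) := by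
          norm_num [Finset.sum_range_succ, Nat.factorial]
      _ ≤ Real.exp (1.9100906/4) := Real.sum_le_exp_of_nonneg (by norm_num) 11
  calc (6.7537:ℝ) ≤ ((16120757753:ℝ)/10000000000) ^ (4:ℕ) := by norm_num
    _ ≤ Real.exp (1.9100906/4) ^ (4:ℕ) := pow_le_pow_left₀ (by norm_num) h4 4
    _ = Real.exp 1.9100906 := by rw [← Real.exp_nat_mul]; norm_num

/-- Proposition 2: `1 + (ln x)/(x−1) < x^(1/x)` for `x ≥ 8.0845` and
`x^(1/x) < (x+1)/(x+1−ln x)` for `x ≥ 6.7537`. -/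
theorem rpow_one_div_self_estimates :
    (∀ x : ℝ, 8.0845 ≤ x → 1 + Real.log x / (x - 1) < x ^ (1 / x)) ∧
    (∀ x : ℝ, 6.7537 ≤ x → x ^ (1 / x) < (x + 1) / (x + 1 - Real.log x)) := by
  constructor
  · intro x hx
    have hx0 : (0:ℝ) < x := by linarith
    have hx1 : (1:ℝ) < x := by linarith
    have hxn : (0:ℝ) ≤ x := hx0.le
    have hx1n : (0:ℝ) ≤ x - 1 := by linarith
    have hxne : x ≠ 0 := ne_of_gt hx0
    set L := Real.log x with hLdef
    have hL0 : (0:ℝ) < L := Real.log_pos hx1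
    have hLn : (0:ℝ) ≤ L := hL0.le
    have hLx : L ≤ x - 1 := Real.log_le_sub_one_of_pos hx0
    -- tangent bounds on L
    have hlow : 3.0899486*x - 8.0845 ≤ x*L := by
      have h1 : Real.log (8.0845/x) ≤ 8.0845/x - 1 :=
        Real.log_le_sub_one_of_pos (by positivity)
      have h2 : Real.log (8.0845/x) = Real.log 8.0845 - L := by
        rw [Real.log_div (by norm_num) hxne]
      have h4 : 3.0899486 - 8.0845/x ≤ L := by
        have := log_lb1; linarith
      have h5 := mul_le_mul_of_nonneg_left h4 hxn
      have h6 : x * (3.0899486 - 8.0845/x) = 3.0899486*x - 8.0845 := by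
        field_simp
      linarith
    have hup : L ≤ 1.0899487 + x/8.0845 := by
      have h1 : Real.log (x/8.0845) ≤ x/8.0845 - 1 :=
        Real.log_le_sub_one_of_pos (by positivity)
      have h2 : Real.log (x/8.0845) = L - Real.log 8.0845 := by
        rw [Real.log_div hxne (by norm_num)]
      have := log_ub1; linarith
    have hm0 : (0:ℝ) ≤ 3.0899486*x - 8.0845 := by linarith
    have hxL0 : (0:ℝ) ≤ x*L := mul_nonneg hxn hLn
    have hw2 : (3.0899486*x - 8.0845)^2 ≤ (x*L)^2 := pow_le_pow_left₀ hm0 hlow 2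
    have hw3 : (3.0899486*x - 8.0845)^3 ≤ (x*L)^3 := pow_le_pow_left₀ hm0 hlow 3
    have hw4 : (3.0899486*x - 8.0845)^4 ≤ (x*L)^4 := pow_le_pow_left₀ hm0 hlow 4
    have hw5 : (3.0899486*x - 8.0845)^5 ≤ (x*L)^5 := pow_le_pow_left₀ hm0 hlow 5
    have hw6 : (3.0899486*x - 8.0845)^6 ≤ (x*L)^6 := pow_le_pow_left₀ hm0 hlow 6
    have hw7 : (3.0899486*x - 8.0845)^7 ≤ (x*L)^7 := pow_le_pow_left₀ hm0 hlow 7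
    have key : L * (5040*x^14) < (5040*x^13*L + 2520*x^12*L^2 + 840*x^11*L^3 + 210*x^10*L^4 + 42*x^9*L^5 + 7*x^8*L^6 + x^7*L^7) * (x-1) := by
      rcases le_or_gt x 8.5 with hc | hc
      · -- head interval, Bernstein certificate on [8.0845, 8.6]
        have hA : (0:ℝ) ≤ x - 8.0845 := by linarith
        have hB : (0:ℝ) ≤ 8.6 - x := by linarith
        have hB1 : (0.1:ℝ) ≤ 8.6 - x := by linarith
        have c0 : (0:ℝ) < (116832889372447393300475460001077712584692240510383781049603475455961692228671890587:ℝ)/964850530473772419073820130804131785001065033569335937500000000000000*(8.6 - x)^15 := by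
          have hp : (0.1:ℝ)^15 ≤ (8.6 - x)^15 := pow_le_pow_left₀ (by norm_num) hB1 15
          linarith [hp]
        have c1 : (0:ℝ) ≤ (4850376321167855929301388772389200009182479130011199280943679728803527973271519525915409:ℝ)/964850530473772419073820130804131785001065033569335937500000000000000*((x - 8.0845)^1*(8.6 - x)^14) := mul_nonneg (by norm_num) (mul_nonneg (pow_nonneg hA 1) (pow_nonneg hB 14))
        have c2 : (0:ℝ) ≤ (69661192412356357543257187345160172815968097648773065721624321212806614606972581567328927:ℝ)/964850530473772419073820130804131785001065033569335937500000000000000*((x - 8.0845)^2*(8.6 - x)^13) := mul_nonneg (by norm_num) (mul_nonneg (pow_nonneg hA 2) (pow_nonneg hB 13))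
        have c3 : (0:ℝ) ≤ (92787259587582099043673343500625873996904059451392003769178110444262141866081525050872569:ℝ)/192970106094754483814764026160826357000213006713867187500000000000000*((x - 8.0845)^3*(8.6 - x)^12) := mul_nonneg (by norm_num) (mul_nonneg (pow_nonneg hA 3) (pow_nonneg hB 12))
        have c4 : (0:ℝ) ≤ (379737298600696526006219954540827809357319034349234809570408380263184073107787935107363709:ℝ)/192970106094754483814764026160826357000213006713867187500000000000000*((x - 8.0845)^4*(8.6 - x)^11) := mul_nonneg (by norm_num) (mul_nonneg (pow_nonneg hA 4) (pow_nonneg hB 11))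
        have c5 : (0:ℝ) ≤ (5333871861139784780707050259148387663740654635809776945526367916763933289993374229663297827:ℝ)/964850530473772419073820130804131785001065033569335937500000000000000*((x - 8.0845)^5*(8.6 - x)^10) := mul_nonneg (by norm_num) (mul_nonneg (pow_nonneg hA 5) (pow_nonneg hB 10))
        have c6 : (0:ℝ) ≤ (10879043246018683198411136377733674435976960275453350509786346912384513594162714483872203909:ℝ)/964850530473772419073820130804131785001065033569335937500000000000000*((x - 8.0845)^6*(8.6 - x)^9) := mul_nonneg (by norm_num) (mul_nonneg (pow_nonneg hA 6) (pow_nonneg hB 9))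
        have c7 : (0:ℝ) ≤ (16610983226849055240465307563260335559564541170702984221704760265954786555097337917909904687:ℝ)/964850530473772419073820130804131785001065033569335937500000000000000*((x - 8.0845)^7*(8.6 - x)^8) := mul_nonneg (by norm_num) (mul_nonneg (pow_nonneg hA 7) (pow_nonneg hB 8))
        have c8 : (0:ℝ) ≤ (48212677213578907590318058187895549516207661664705776856944403352298060914919490043078697:ℝ)/2412126326184431047684550327010329462502662583923339843750000000000*((x - 8.0845)^8*(8.6 - x)^7) := mul_nonneg (by norm_num) (mul_nonneg (pow_nonneg hA 8) (pow_nonneg hB 7))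
        have c9 : (0:ℝ) ≤ (106900243541742499591224401102040536162712335282164943160054574671369116318468960699189:ℝ)/6030315815461077619211375817525823656256656459808349609375000000*((x - 8.0845)^9*(8.6 - x)^6) := mul_nonneg (by norm_num) (mul_nonneg (pow_nonneg hA 9) (pow_nonneg hB 6))
        have c10 : (0:ℝ) ≤ (180150031688182351306075000932994291760736595549864235268384771924166825393199745021:ℝ)/15075789538652694048028439543814559140641641149520874023437500*((x - 8.0845)^10*(8.6 - x)^5) := mul_nonneg (by norm_num) (mul_nonneg (pow_nonneg hA 10) (pow_nonneg hB 5))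
        have c11 : (0:ℝ) ≤ (181662483618883572743203162508161332448436491558705750732859538143155234633408332:ℝ)/30151579077305388096056879087629118281283282299041748046875*((x - 8.0845)^11*(8.6 - x)^4) := mul_nonneg (by norm_num) (mul_nonneg (pow_nonneg hA 11) (pow_nonneg hB 4))
        have c12 : (0:ℝ) ≤ (13282652086094358437652646568064808066892085611420625011327320941541719200945856:ℝ)/6030315815461077619211375817525823656256656459808349609375*((x - 8.0845)^12*(8.6 - x)^3) := mul_nonneg (by norm_num) (mul_nonneg (pow_nonneg hA 12) (pow_nonneg hB 3))
        have c13 : (0:ℝ) ≤ (133088939026563625377593579862806737462165054425329322086568854584448324852736:ℝ)/241212632618443104768455032701032946250266258392333984375*((x - 8.0845)^13*(8.6 - x)^2) := mul_nonneg (by norm_num) (mul_nonneg (pow_nonneg hA 13) (pow_nonneg hB 2))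
        have c14 : (0:ℝ) ≤ (817512548189547837939504464270630515990304391589397991537922593444834557952:ℝ)/9648505304737724190738201308041317850010650335693359375*((x - 8.0845)^14*(8.6 - x)^1) := mul_nonneg (by norm_num) (mul_nonneg (pow_nonneg hA 14) (pow_nonneg hB 1))
        have c15 : (0:ℝ) ≤ (37535295446643306085256563165258777916086197779209245951302005817557353234432:ℝ)/6240267290892170497601839077988802732672888211113037109375*(x - 8.0845)^15 := mul_nonneg (by norm_num) (pow_nonneg hA 15)
        have hcert : (0:ℝ) < (x-1)*(5040*x^12*(3.0899486*x - 8.0845) + 2520*x^10*(3.0899486*x - 8.0845)^2 + 840*x^8*(3.0899486*x - 8.0845)^3 + 210*x^6*(3.0899486*x - 8.0845)^4 + 42*x^4*(3.0899486*x - 8.0845)^5 + 7*x^2*(3.0899486*x - 8.0845)^6 + (3.0899486*x - 8.0845)^7) - 5040*x^14*(1.0899487 + x/8.0845) := by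
          have hid : (x-1)*(5040*x^12*(3.0899486*x - 8.0845) + 2520*x^10*(3.0899486*x - 8.0845)^2 + 840*x^8*(3.0899486*x - 8.0845)^3 + 210*x^6*(3.0899486*x - 8.0845)^4 + 42*x^4*(3.0899486*x - 8.0845)^5 + 7*x^2*(3.0899486*x - 8.0845)^6 + (3.0899486*x - 8.0845)^7) - 5040*x^14*(1.0899487 + x/8.0845) = (116832889372447393300475460001077712584692240510383781049603475455961692228671890587:ℝ)/964850530473772419073820130804131785001065033569335937500000000000000*(8.6 - x)^15 + (4850376321167855929301388772389200009182479130011199280943679728803527973271519525915409:ℝ)/964850530473772419073820130804131785001065033569335937500000000000000*((x - 8.0845)^1*(8.6 - x)^14) + (69661192412356357543257187345160172815968097648773065721624321212806614606972581567328927:ℝ)/964850530473772419073820130804131785001065033569335937500000000000000*((x - 8.0845)^2*(8.6 - x)^13) + (92787259587582099043673343500625873996904059451392003769178110444262141866081525050872569:ℝ)/192970106094754483814764026160826357000213006713867187500000000000000*((x - 8.0845)^3*(8.6 - x)^12) + (379737298600696526006219954540827809357319034349234809570408380263184073107787935107363709:ℝ)/192970106094754483814764026160826357000213006713867187500000000000000*((x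 - 8.0845)^4*(8.6 - x)^11) + (5333871861139784780707050259148387663740654635809776945526367916763933289993374229663297827:ℝ)/964850530473772419073820130804131785001065033569335937500000000000000*((x - 8.0845)^5*(8.6 - x)^10) + (10879043246018683198411136377733674435976960275453350509786346912384513594162714483872203909:ℝ)/964850530473772419073820130804131785001065033569335937500000000000000*((x - 8.0845)^6*(8.6 - x)^9) + (16610983226849055240465307563260335559564541170702984221704760265954786555097337917909904687:ℝ)/964850530473772419073820130804131785001065033569335937500000000000000*((x - 8.0845)^7*(8.6 - x)^8) + (48212677213578907590318058187895549516207661664705776856944403352298060914919490043078697:ℝ)/2412126326184431047684550327010329462502662583923339843750000000000*((x - 8.0845)^8*(8.6 - x)^7) + (106900243541742499591224401102040536162712335282164943160054574671369116318468960699189:ℝ)/6030315815461077619211375817525823656256656459808349609375000000*((x - 8.0845)^9*(8.6 - x)^6) + (180150031688182351306075000932994291760736595549864235268384771924166825393199745021:ℝ)/15075789538652694048028439543814559140641641149520874023437500*((x - 8.0845)^10*(8.6 - x)^5) + (181662483618883572743203162508161332448436491558705750732859538143155234633408332:ℝ)/30151579077305388096056879087629118281283282299041748046875*((x - 8.0845)^11*(8.6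 - x)^4) + (13282652086094358437652646568064808066892085611420625011327320941541719200945856:ℝ)/6030315815461077619211375817525823656256656459808349609375*((x - 8.0845)^12*(8.6 - x)^3) + (133088939026563625377593579862806737462165054425329322086568854584448324852736:ℝ)/241212632618443104768455032701032946250266258392333984375*((x - 8.0845)^13*(8.6 - x)^2) + (817512548189547837939504464270630515990304391589397991537922593444834557952:ℝ)/9648505304737724190738201308041317850010650335693359375*((x - 8.0845)^14*(8.6 - x)^1) + (37535295446643306085256563165258777916086197779209245951302005817557353234432:ℝ)/6240267290892170497601839077988802732672888211113037109375*(x - 8.0845)^15 := by ring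
          rw [hid]
          linarith [c0, c1, c2, c3, c4, c5, c6, c7, c8, c9, c10, c11, c12, c13, c14, c15]
        have hc1 : (x-1)*(x^12*(3.0899486*x - 8.0845)) ≤ (x-1)*(x^12*(x*L)) :=
          mul_le_mul_of_nonneg_left (mul_le_mul_of_nonneg_left hlow (pow_nonneg hxn 12)) hx1n
        have hc2 : (x-1)*(x^10*(3.0899486*x - 8.0845)^2) ≤ (x-1)*(x^10*(x*L)^2) :=
          mul_le_mul_of_nonneg_left (mul_le_mul_of_nonneg_left hw2 (pow_nonneg hxn 10)) hx1n
        have hc3 : (x-1)*(x^8*(3.0899486*x - 8.0845)^3) ≤ (x-1)*(x^8*(x*L)^3) :=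
          mul_le_mul_of_nonneg_left (mul_le_mul_of_nonneg_left hw3 (pow_nonneg hxn 8)) hx1n
        have hc4 : (x-1)*(x^6*(3.0899486*x - 8.0845)^4) ≤ (x-1)*(x^6*(x*L)^4) :=
          mul_le_mul_of_nonneg_left (mul_le_mul_of_nonneg_left hw4 (pow_nonneg hxn 6)) hx1n
        have hc5 : (x-1)*(x^4*(3.0899486*x - 8.0845)^5) ≤ (x-1)*(x^4*(x*L)^5) :=
          mul_le_mul_of_nonneg_left (mul_le_mul_of_nonneg_left hw5 (pow_nonneg hxn 4)) hx1n
        have hc6 : (x-1)*(x^2*(3.0899486*x - 8.0845)^6) ≤ (x-1)*(x^2*(x*L)^6) :=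
          mul_le_mul_of_nonneg_left (mul_le_mul_of_nonneg_left hw6 (pow_nonneg hxn 2)) hx1n
        have hc7 : (x-1)*(3.0899486*x - 8.0845)^7 ≤ (x-1)*(x*L)^7 :=
          mul_le_mul_of_nonneg_left hw7 hx1n
        have hmu14 : 5040*x^14*L ≤ 5040*x^14*(1.0899487 + x/8.0845) :=
          mul_le_mul_of_nonneg_left hup (mul_nonneg (by norm_num) (pow_nonneg hxn 14))
        linarith [hcert, hc1, hc2, hc3, hc4, hc5, hc6, hc7, hmu14]
      · -- tail x > 8.5
        have hy : (0:ℝ) ≤ x - 8.5 := by linarith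
        have hq : (0:ℝ) < 3*x^2*(x-1)*(3.0899486*x - 8.0845) + (x-1)*(3.0899486*x - 8.0845)^2 - 6*x^4 := by
          nlinarith [hy, pow_nonneg hy 2, pow_nonneg hy 3, pow_nonneg hy 4]
        have hA1 : 3*x^2*(x-1)*(3.0899486*x - 8.0845) ≤ 3*x^2*(x-1)*(x*L) :=
          mul_le_mul_of_nonneg_left hlow
            (mul_nonneg (mul_nonneg (by norm_num) (pow_nonneg hxn 2)) hx1n)
        have hA2 : (x-1)*(3.0899486*x - 8.0845)^2 ≤ (x-1)*(x*L)^2 :=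
          mul_le_mul_of_nonneg_left hw2 hx1n
        have hx2h : (0:ℝ) < 3*x^2*(x-1)*(x*L) + (x-1)*(x*L)^2 - 6*x^4 := by linarith
        have hh : (0:ℝ) < 3*x*(x-1)*L + (x-1)*L^2 - 6*x^2 := by
          by_contra hcon
          push_neg at hcon
          nlinarith [hx2h, mul_le_mul_of_nonneg_left hcon (sq_nonneg x)]
        have hrest : (0:ℝ) ≤ (x-1)*(210*x^10*L^4 + 42*x^9*L^5 + 7*x^8*L^6 + x^7*L^7) := by
          apply mul_nonneg hx1n
          have t1 : (0:ℝ) ≤ 210*x^10*L^4 :=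
            mul_nonneg (mul_nonneg (by norm_num) (pow_nonneg hxn 10)) (pow_nonneg hLn 4)
          have t2 : (0:ℝ) ≤ 42*x^9*L^5 :=
            mul_nonneg (mul_nonneg (by norm_num) (pow_nonneg hxn 9)) (pow_nonneg hLn 5)
          have t3 : (0:ℝ) ≤ 7*x^8*L^6 :=
            mul_nonneg (mul_nonneg (by norm_num) (pow_nonneg hxn 8)) (pow_nonneg hLn 6)
          have t4 : (0:ℝ) ≤ x^7*L^7 :=
            mul_nonneg (pow_nonneg hxn 7) (pow_nonneg hLn 7)
          linarith
        have hfac : (0:ℝ) < 840*x^11*L*(3*x*(x-1)*L + (x-1)*L^2 - 6*x^2) :=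
          mul_pos (mul_pos (mul_pos (by norm_num) (pow_pos hx0 11)) hL0) hh
        linarith [hfac, hrest]
    -- conclude part 1
    have hu0 : (0:ℝ) ≤ L/x := div_nonneg hLn hxn
    have hsum := Real.sum_le_exp_of_nonneg hu0 8
    have hsum_eq : (∑ i ∈ Finset.range 8, (L/x) ^ i / i.factorial)
        = 1 + (L/x + (L/x)^2/2 + (L/x)^3/6 + (L/x)^4/24 + (L/x)^5/120 + (L/x)^6/720 + (L/x)^7/5040) := by
      norm_num [Finset.sum_range_succ, Nat.factorial]
      ring
    rw [hsum_eq] at hsum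
    have hfrac : L/(x-1) < L/x + (L/x)^2/2 + (L/x)^3/6 + (L/x)^4/24 + (L/x)^5/120 + (L/x)^6/720 + (L/x)^7/5040 := by
      rw [div_lt_iff₀ (by linarith : (0:ℝ) < x - 1)]
      have hid : (L/x + (L/x)^2/2 + (L/x)^3/6 + (L/x)^4/24 + (L/x)^5/120 + (L/x)^6/720 + (L/x)^7/5040) * (x-1)
          = ((5040*x^13*L + 2520*x^12*L^2 + 840*x^11*L^3 + 210*x^10*L^4 + 42*x^9*L^5 + 7*x^8*L^6 + x^7*L^7) * (x-1)) / (5040*x^14) := by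
        field_simp
        ring
      rw [hid, lt_div_iff₀ (mul_pos (by norm_num : (0:ℝ) < 5040) (pow_pos hx0 14))]
      linarith [key]
    rw [Real.rpow_def_of_pos hx0, mul_one_div]
    linarith [hsum, hfrac]
  · intro x hx
    have hx0 : (0:ℝ) < x := by linarith
    have hx1 : (1:ℝ) < x := by linarith
    have hxn : (0:ℝ) ≤ x := hx0.le
    have hxne : x ≠ 0 := ne_of_gt hx0
    set L := Real.log x with hLdef
    have hL0 : (0:ℝ) < L := Real.log_pos hx1
    have hLn : (0:ℝ) ≤ L := hL0.le
    have hLx : L ≤ x - 1 := Real.log_le_sub_one_of_pos hx0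
    have hLxx : L ≤ x := by linarith
    have hlow : 2.9100905*x - 6.7537 ≤ x*L := by
      have h1 : Real.log (6.7537/x) ≤ 6.7537/x - 1 :=
        Real.log_le_sub_one_of_pos (by positivity)
      have h2 : Real.log (6.7537/x) = Real.log 6.7537 - L := by
        rw [Real.log_div (by norm_num) hxne]
      have h4 : 2.9100905 - 6.7537/x ≤ L := by
        have := log_lb2; linarith
      have h5 := mul_le_mul_of_nonneg_left h4 hxn
      have h6 : x * (2.9100905 - 6.7537/x) = 2.9100905*x - 6.7537 := by
        field_simp
      linarith
    have hup : L ≤ (0.9100906 + 10000*x/67537) := by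
      have h1 : Real.log (x/6.7537) ≤ x/6.7537 - 1 :=
        Real.log_le_sub_one_of_pos (by positivity)
      have h2 : Real.log (x/6.7537) = L - Real.log 6.7537 := by
        rw [Real.log_div hxne (by norm_num)]
      have h3 : x/6.7537 = 10000*x/67537 := by ring
      have := log_ub2; linarith [h3.le, h3.ge]
    have hm0 : (0:ℝ) ≤ 2.9100905*x - 6.7537 := by linarith
    have hxL0 : (0:ℝ) ≤ x*L := mul_nonneg hxn hLn
    have hxmu : x*L ≤ x*(0.9100906 + 10000*x/67537) := mul_le_mul_of_nonneg_left hup hxn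
    have master : (322560*x^15*L - 161280*x^14*L^2 + 53760*x^13*L^3 - 13440*x^12*L^4 + 2688*x^11*L^5 - 448*x^10*L^6 + 64*x^9*L^7 + 9*x^8*L^8) * (x+1) < L * (322560*x^16) := by
      rcases le_or_gt x 7.1 with hc | hc
      · -- head interval, Bernstein certificate on [6.7537, 7.2]
        have hA : (0:ℝ) ≤ x - 6.7537 := by linarith
        have hB : (0:ℝ) ≤ 7.2 - x := by linarith
        have hB1 : (0.1:ℝ) ≤ 7.2 - x := by linarith
        have c0 : (0:ℝ) < (1547411901950738676732600155911044265979387258877559213118796724198465177843116303986047027068100857127:ℝ)/431933721300206431391649603248113431553869266041679624426912433593750000000000000000*(7.2 - x)^17 := by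
          have hp : (0.1:ℝ)^17 ≤ (7.2 - x)^17 := pow_le_pow_left₀ (by norm_num) hB1 17
          linarith [hp]
        have c1 : (0:ℝ) ≤ (2415792693937768886723642638065300297620888727845411718138360305128041720291009844174275103709525609911377:ℝ)/53991715162525803923956200406014178944233658255209953053364054199218750000000000000*((x - 6.7537)^1*(7.2 - x)^16) := mul_nonneg (by norm_num) (mul_nonneg (pow_nonneg hA 1) (pow_nonneg hB 16))
        have c2 : (0:ℝ) ≤ (78803868341991677057874502171828788263717235212568136794676928733178834209260818070742116871434540583876389:ℝ)/107983430325051607847912400812028357888467316510419906106728108398437500000000000000*((x - 6.7537)^2*(7.2 - x)^15) := mul_nonneg (by norm_num) (mul_nonneg (pow_nonneg hA 2) (pow_nonneg hB 15))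
        have c3 : (0:ℝ) ≤ (300786943221347949151309274339622148264372296955586421588168334016055347104257512732049860118927762059829889:ℝ)/53991715162525803923956200406014178944233658255209953053364054199218750000000000000*((x - 6.7537)^3*(7.2 - x)^14) := mul_nonneg (by norm_num) (mul_nonneg (pow_nonneg hA 3) (pow_nonneg hB 14))
        have c4 : (0:ℝ) ≤ (1140631691598633606447918815339820190480155344320758806475641233703466751315472424375802924635497893023051689:ℝ)/43193372130020643139164960324811343155386926604167962442691243359375000000000000000*((x - 6.7537)^4*(7.2 - x)^13) := mul_nonneg (by norm_num) (mul_nonneg (pow_nonneg hA 4) (pow_nonneg hB 13))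
        have c5 : (0:ℝ) ≤ (4695845111483927459312866110484476801422158059612708796697599086007070769021691296950350105279307656093164889:ℝ)/53991715162525803923956200406014178944233658255209953053364054199218750000000000000*((x - 6.7537)^5*(7.2 - x)^12) := mul_nonneg (by norm_num) (mul_nonneg (pow_nonneg hA 5) (pow_nonneg hB 12))
        have c6 : (0:ℝ) ≤ (22782232416018879946003214745030534932138944032988966837723284272197966144911207462607794294776883371286623389:ℝ)/107983430325051607847912400812028357888467316510419906106728108398437500000000000000*((x - 6.7537)^6*(7.2 - x)^11) := mul_nonneg (by norm_num) (mul_nonneg (pow_nonneg hA 6) (pow_nonneg hB 11))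
        have c7 : (0:ℝ) ≤ (21046697935868004238200043356947899436081072585202453189365518192926752253553097601204899182071967737752684127:ℝ)/53991715162525803923956200406014178944233658255209953053364054199218750000000000000*((x - 6.7537)^7*(7.2 - x)^10) := mul_nonneg (by norm_num) (mul_nonneg (pow_nonneg hA 7) (pow_nonneg hB 10))
        have c8 : (0:ℝ) ≤ (241621468494027911312973924258789748788586633787029181456676184602802049682625996796992164559437057288954067127:ℝ)/431933721300206431391649603248113431553869266041679624426912433593750000000000000000*((x - 6.7537)^8*(7.2 - x)^9) := mul_nonneg (by norm_num) (mul_nonneg (pow_nonneg hA 8) (pow_nonneg hB 9))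
        have c9 : (0:ℝ) ≤ (9186795800298587478254689880103991491185806435762984662907346869889227635070889630071782270627707657499274254783:ℝ)/14585753867726020878448919627283918413426834310328458397460192513810546875000000000000*((x - 6.7537)^9*(7.2 - x)^8) := mul_nonneg (by norm_num) (mul_nonneg (pow_nonneg hA 9) (pow_nonneg hB 8))
        have c10 : (0:ℝ) ≤ (8588720514704931563484423290212027939238082134295460812731323041310951337685004581849830218698170725163272981881:ℝ)/15391844671322066751059448201060531216993876700260204606082328465706607879638671875000*((x - 6.7537)^10*(7.2 - x)^7) := mul_nonneg (by norm_num) (mul_nonneg (pow_nonneg hA 10) (pow_nonneg hB 7))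
        have c11 : (0:ℝ) ≤ (402768133642118160264915419681928529046190598012167186196448134314445217001707821069826064169529044619325868816068:ℝ)/1039519013567078422166301953155025096802115450705473438480982217588427176367156982421875*((x - 6.7537)^11*(7.2 - x)^6) := mul_nonneg (by norm_num) (mul_nonneg (pow_nonneg hA 11) (pow_nonneg hB 6))
        have c12 : (0:ℝ) ≤ (117096820662870374612131112490358890968653023622495585574879843405502451344463827999196329176304812209600262485486592:ℝ)/561647964954238203182764280081847439701795769554364476917520768234156849682469448974609375*((x - 6.7537)^12*(7.2 - x)^5) := mul_nonneg (by norm_num) (mul_nonneg (pow_nonneg hA 12) (pow_nonneg hB 5))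
        have c13 : (0:ℝ) ≤ (25839235769913088435290492428195717957325632763700553515909174487434880912531046505139996418784891506327044369722744832:ℝ)/303456148872915084226834809471101844281121447107144909420628800993842009256039513403185546875*((x - 6.7537)^13*(7.2 - x)^4) := mul_nonneg (by norm_num) (mul_nonneg (pow_nonneg hA 13) (pow_nonneg hB 4))
        have c14 : (0:ℝ) ≤ (4178777262902261326966529426877106232074541458198762744071206152787295581817888450212111227740649219371039570039876354048:ℝ)/163956143411440528347421940217998442057712793386201965980328058661768862233001124933687538234375*((x - 6.7537)^14*(7.2 - x)^3) := mul_nonneg (by norm_num) (mul_nonneg (pow_nonneg hA 14) (pow_nonneg hB 3))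
        have c15 : (0:ℝ) ≤ (466383087744665240367646977115555011896166572856601093997030780976055188171633598426506780666006977592696354488221257695232:ℝ)/88584848460627671703998684612023686250013991415391377411307328782719069189041575797171642157879875*((x - 6.7537)^15*(7.2 - x)^2) := mul_nonneg (by norm_num) (mul_nonneg (pow_nonneg hA 15) (pow_nonneg hB 2))
        have c16 : (0:ℝ) ≤ (32029427506926756055230127527877885302596443161441936002766879285241694595054108702122224689876959753087179242049563386707968:ℝ)/47862039283883288510983673301137949586137559505770299649819704511987982206562407236908649571333864943*((x - 6.7537)^16*(7.2 - x)^1) := mul_nonneg (by norm_num) (mul_nonneg (pow_nonneg hA 16) (pow_nonneg hB 1))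
        have c17 : (0:ℝ) ≤ (1882006196104939068253632885713956958437513950657902134309998964623541571492292239572420372912462029647243343396656381952000:ℝ)/47862039283883288510983673301137949586137559505770299649819704511987982206562407236908649571333864943*(x - 6.7537)^17 := mul_nonneg (by norm_num) (pow_nonneg hA 17)
        have hcert : (0:ℝ) < 322560*x^15*(2.9100905*x - 6.7537) - (x+1)*(322560*x^14*(x*(0.9100906 + 10000*x/67537)) - 161280*x^12*(2.9100905*x - 6.7537)^2 + 53760*x^10*(x*(0.9100906 + 10000*x/67537))^3 - 13440*x^8*(2.9100905*x - 6.7537)^4 + 2688*x^6*(x*(0.9100906 + 10000*x/67537))^5 - 448*x^4*(2.9100905*x - 6.7537)^6 + 64*x^2*(x*(0.9100906 + 10000*x/67537))^7 + 9*(x*(0.9100906 + 10000*x/67537))^8) := by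
          have hid : 322560*x^15*(2.9100905*x - 6.7537) - (x+1)*(322560*x^14*(x*(0.9100906 + 10000*x/67537)) - 161280*x^12*(2.9100905*x - 6.7537)^2 + 53760*x^10*(x*(0.9100906 + 10000*x/67537))^3 - 13440*x^8*(2.9100905*x - 6.7537)^4 + 2688*x^6*(x*(0.9100906 + 10000*x/67537))^5 - 448*x^4*(2.9100905*x - 6.7537)^6 + 64*x^2*(x*(0.9100906 + 10000*x/67537))^7 + 9*(x*(0.9100906 + 10000*x/67537))^8) = (1547411901950738676732600155911044265979387258877559213118796724198465177843116303986047027068100857127:ℝ)/431933721300206431391649603248113431553869266041679624426912433593750000000000000000*(7.2 - x)^17 + (2415792693937768886723642638065300297620888727845411718138360305128041720291009844174275103709525609911377:ℝ)/53991715162525803923956200406014178944233658255209953053364054199218750000000000000*((x - 6.7537)^1*(7.2 - x)^16) + (78803868341991677057874502171828788263717235212568136794676928733178834209260818070742116871434540583876389:ℝ)/107983430325051607847912400812028357888467316510419906106728108398437500000000000000*((x - 6.7537)^2*(7.2 - x)^15) + (300786943221347949151309274339622148264372296955586421588168334016055347104257512732049860118927762059829889:ℝ)/53991715162525803923956200406014178944233658255209953053364054199218750000000000000*((x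 - 6.7537)^3*(7.2 - x)^14) + (1140631691598633606447918815339820190480155344320758806475641233703466751315472424375802924635497893023051689:ℝ)/43193372130020643139164960324811343155386926604167962442691243359375000000000000000*((x - 6.7537)^4*(7.2 - x)^13) + (4695845111483927459312866110484476801422158059612708796697599086007070769021691296950350105279307656093164889:ℝ)/53991715162525803923956200406014178944233658255209953053364054199218750000000000000*((x - 6.7537)^5*(7.2 - x)^12) + (22782232416018879946003214745030534932138944032988966837723284272197966144911207462607794294776883371286623389:ℝ)/107983430325051607847912400812028357888467316510419906106728108398437500000000000000*((x - 6.7537)^6*(7.2 - x)^11) + (21046697935868004238200043356947899436081072585202453189365518192926752253553097601204899182071967737752684127:ℝ)/53991715162525803923956200406014178944233658255209953053364054199218750000000000000*((x - 6.7537)^7*(7.2 - x)^10) + (241621468494027911312973924258789748788586633787029181456676184602802049682625996796992164559437057288954067127:ℝ)/431933721300206431391649603248113431553869266041679624426912433593750000000000000000*((x - 6.7537)^8*(7.2 - x)^9) + (9186795800298587478254689880103991491185806435762984662907346869889227635070889630071782270627707657499274254783:ℝ)/14585753867726020878448919627283918413426834310328458397460192513810546875000000000000*((x - 6.7537)^9*(7.2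 - x)^8) + (8588720514704931563484423290212027939238082134295460812731323041310951337685004581849830218698170725163272981881:ℝ)/15391844671322066751059448201060531216993876700260204606082328465706607879638671875000*((x - 6.7537)^10*(7.2 - x)^7) + (402768133642118160264915419681928529046190598012167186196448134314445217001707821069826064169529044619325868816068:ℝ)/1039519013567078422166301953155025096802115450705473438480982217588427176367156982421875*((x - 6.7537)^11*(7.2 - x)^6) + (117096820662870374612131112490358890968653023622495585574879843405502451344463827999196329176304812209600262485486592:ℝ)/561647964954238203182764280081847439701795769554364476917520768234156849682469448974609375*((x - 6.7537)^12*(7.2 - x)^5) + (25839235769913088435290492428195717957325632763700553515909174487434880912531046505139996418784891506327044369722744832:ℝ)/303456148872915084226834809471101844281121447107144909420628800993842009256039513403185546875*((x - 6.7537)^13*(7.2 - x)^4) + (4178777262902261326966529426877106232074541458198762744071206152787295581817888450212111227740649219371039570039876354048:ℝ)/163956143411440528347421940217998442057712793386201965980328058661768862233001124933687538234375*((x - 6.7537)^14*(7.2 - x)^3) + (466383087744665240367646977115555011896166572856601093997030780976055188171633598426506780666006977592696354488221257695232:ℝ)/88584848460627671703998684612023686250013991415391377411307328782719069189041575797171642157879875*((x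 - 6.7537)^15*(7.2 - x)^2) + (32029427506926756055230127527877885302596443161441936002766879285241694595054108702122224689876959753087179242049563386707968:ℝ)/47862039283883288510983673301137949586137559505770299649819704511987982206562407236908649571333864943*((x - 6.7537)^16*(7.2 - x)^1) + (1882006196104939068253632885713956958437513950657902134309998964623541571492292239572420372912462029647243343396656381952000:ℝ)/47862039283883288510983673301137949586137559505770299649819704511987982206562407236908649571333864943*(x - 6.7537)^17 := by ring
          rw [hid]
          linarith [c0, c1, c2, c3, c4, c5, c6, c7, c8, c9, c10, c11, c12, c13, c14, c15, c16, c17]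
        have hd2 : (2.9100905*x - 6.7537)^2 ≤ (x*L)^2 := pow_le_pow_left₀ hm0 hlow 2
        have hd4 : (2.9100905*x - 6.7537)^4 ≤ (x*L)^4 := pow_le_pow_left₀ hm0 hlow 4
        have hd6 : (2.9100905*x - 6.7537)^6 ≤ (x*L)^6 := pow_le_pow_left₀ hm0 hlow 6
        have hu3 : (x*L)^3 ≤ (x*(0.9100906 + 10000*x/67537))^3 := pow_le_pow_left₀ hxL0 hxmu 3
        have hu5 : (x*L)^5 ≤ (x*(0.9100906 + 10000*x/67537))^5 := pow_le_pow_left₀ hxL0 hxmu 5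
        have hu7 : (x*L)^7 ≤ (x*(0.9100906 + 10000*x/67537))^7 := pow_le_pow_left₀ hxL0 hxmu 7
        have hu8 : (x*L)^8 ≤ (x*(0.9100906 + 10000*x/67537))^8 := pow_le_pow_left₀ hxL0 hxmu 8
        have hx1p : (0:ℝ) ≤ x + 1 := by linarith
        have hk1 : (x+1)*(x^14*(x*L)) ≤ (x+1)*(x^14*(x*(0.9100906 + 10000*x/67537))) :=
          mul_le_mul_of_nonneg_left (mul_le_mul_of_nonneg_left hxmu (pow_nonneg hxn 14)) hx1p
        have hk2 : (x+1)*(x^12*(2.9100905*x - 6.7537)^2) ≤ (x+1)*(x^12*(x*L)^2) :=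
          mul_le_mul_of_nonneg_left (mul_le_mul_of_nonneg_left hd2 (pow_nonneg hxn 12)) hx1p
        have hk3 : (x+1)*(x^10*(x*L)^3) ≤ (x+1)*(x^10*(x*(0.9100906 + 10000*x/67537))^3) :=
          mul_le_mul_of_nonneg_left (mul_le_mul_of_nonneg_left hu3 (pow_nonneg hxn 10)) hx1p
        have hk4 : (x+1)*(x^8*(2.9100905*x - 6.7537)^4) ≤ (x+1)*(x^8*(x*L)^4) :=
          mul_le_mul_of_nonneg_left (mul_le_mul_of_nonneg_left hd4 (pow_nonneg hxn 8)) hx1p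
        have hk5 : (x+1)*(x^6*(x*L)^5) ≤ (x+1)*(x^6*(x*(0.9100906 + 10000*x/67537))^5) :=
          mul_le_mul_of_nonneg_left (mul_le_mul_of_nonneg_left hu5 (pow_nonneg hxn 6)) hx1p
        have hk6 : (x+1)*(x^4*(2.9100905*x - 6.7537)^6) ≤ (x+1)*(x^4*(x*L)^6) :=
          mul_le_mul_of_nonneg_left (mul_le_mul_of_nonneg_left hd6 (pow_nonneg hxn 4)) hx1p
        have hk7 : (x+1)*(x^2*(x*L)^7) ≤ (x+1)*(x^2*(x*(0.9100906 + 10000*x/67537))^7) :=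
          mul_le_mul_of_nonneg_left (mul_le_mul_of_nonneg_left hu7 (pow_nonneg hxn 2)) hx1p
        have hk8 : (x+1)*(x*L)^8 ≤ (x+1)*(x*(0.9100906 + 10000*x/67537))^8 :=
          mul_le_mul_of_nonneg_left hu8 hx1p
        have hllb : 322560*x^15*(2.9100905*x - 6.7537) ≤ 322560*x^15*(x*L) :=
          mul_le_mul_of_nonneg_left hlow (mul_nonneg (by norm_num) (pow_nonneg hxn 15))
        linarith [hcert, hk1, hk2, hk3, hk4, hk5, hk6, hk7, hk8, hllb]
      · -- tail x > 7.1
        have hy : (0:ℝ) ≤ x - 7.1 := by linarith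
        have hq : (0:ℝ) < (2.9100905*x - 6.7537)*(3*x - (0.9100906 + 10000*x/67537))*(x+1) - 6*x^3 := by
          nlinarith [hy, pow_nonneg hy 2, pow_nonneg hy 3]
        have h3a : (0:ℝ) ≤ 3*x - (0.9100906 + 10000*x/67537) := by linarith
        have hab : (2.9100905*x - 6.7537)*(3*x - (0.9100906 + 10000*x/67537)) ≤ (x*L)*(3*x - L) :=
          mul_le_mul hlow (by linarith) h3a hxL0
        have habx : (2.9100905*x - 6.7537)*(3*x - (0.9100906 + 10000*x/67537))*(x+1) ≤ (x*L)*(3*x - L)*(x+1) :=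
          mul_le_mul_of_nonneg_right hab (by linarith)
        have hx2h : (0:ℝ) < (x*L)*(3*x - L)*(x+1) - 6*x^3 := by linarith
        have hh2 : (0:ℝ) < 3*x*L*(x+1) - L^2*(x+1) - 6*x^2 := by
          by_contra hcon
          push_neg at hcon
          nlinarith [hx2h, mul_le_mul_of_nonneg_left hcon hxn]
        have e1 : 2688*x^11*L^5 ≤ 2688*x^12*L^4 := by
          nlinarith [mul_nonneg (sub_nonneg.2 hLxx)
            (mul_nonneg (mul_nonneg (by norm_num : (0:ℝ) ≤ 2688) (pow_nonneg hxn 11)) (pow_nonneg hLn 4))]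
        have e2 : 64*x^9*L^7 ≤ 64*x^12*L^4 := by
          nlinarith [mul_nonneg (sub_nonneg.2 (pow_le_pow_left₀ hLn hLxx 3))
            (mul_nonneg (mul_nonneg (by norm_num : (0:ℝ) ≤ 64) (pow_nonneg hxn 9)) (pow_nonneg hLn 4))]
        have e3 : 9*x^8*L^8 ≤ 9*x^12*L^4 := by
          nlinarith [mul_nonneg (sub_nonneg.2 (pow_le_pow_left₀ hLn hLxx 4))
            (mul_nonneg (mul_nonneg (by norm_num : (0:ℝ) ≤ 9) (pow_nonneg hxn 8)) (pow_nonneg hLn 4))]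
        have e4 : (0:ℝ) ≤ 448*x^10*L^6 :=
          mul_nonneg (mul_nonneg (by norm_num) (pow_nonneg hxn 10)) (pow_nonneg hLn 6)
        have e5 : (0:ℝ) ≤ x^12*L^4 := mul_nonneg (pow_nonneg hxn 12) (pow_nonneg hLn 4)
        have hinner : -13440*x^12*L^4 + 2688*x^11*L^5 - 448*x^10*L^6 + 64*x^9*L^7 + 9*x^8*L^8 ≤ 0 := by
          linarith
        have hdrop : (x+1)*(-13440*x^12*L^4 + 2688*x^11*L^5 - 448*x^10*L^6 + 64*x^9*L^7 + 9*x^8*L^8) ≤ 0 := by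
          have := mul_le_mul_of_nonneg_left hinner (by linarith : (0:ℝ) ≤ x+1)
          linarith [this]
        have hfac : (0:ℝ) < 53760*x^13*L*(3*x*L*(x+1) - L^2*(x+1) - 6*x^2) :=
          mul_pos (mul_pos (mul_pos (by norm_num) (pow_pos hx0 13)) hL0) hh2
        linarith [hfac, hdrop]
    -- conclude part 2
    have hu0 : (0:ℝ) ≤ L/x := div_nonneg hLn hxn
    have hu1 : L/x ≤ 1 := by rw [div_le_one hx0]; linarith
    have habs : |(-(L/x))| ≤ 1 := by rw [abs_neg, abs_of_nonneg hu0]; exact hu1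
    have hb := Real.exp_bound habs (by norm_num : 0 < 8)
    have h1 := (abs_le.mp hb).1
    have h2 : (∑ m ∈ Finset.range 8, (-(L/x)) ^ m / m.factorial)
        = 1 - L/x + (L/x)^2/2 - (L/x)^3/6 + (L/x)^4/24 - (L/x)^5/120 + (L/x)^6/720 - (L/x)^7/5040 := by
      norm_num [Finset.sum_range_succ, Nat.factorial]
      ring
    have h4abs : |(-(L/x))| = L/x := by rw [abs_neg, abs_of_nonneg hu0]
    have hexp : 1 - L/x + (L/x)^2/2 - (L/x)^3/6 + (L/x)^4/24 - (L/x)^5/120 + (L/x)^6/720 - (L/x)^7/5040 - (L/x)^8*(9/322560) ≤ Real.exp (-(L/x)) := by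
      rw [h2, h4abs] at h1
      norm_num [Nat.factorial] at h1
      linarith [h1]
    have hS2 : 1 - L/x + (L/x)^2/2 - (L/x)^3/6 + (L/x)^4/24 - (L/x)^5/120 + (L/x)^6/720 - (L/x)^7/5040 - (L/x)^8*(9/322560)
        = 1 - ((322560*x^15*L - 161280*x^14*L^2 + 53760*x^13*L^3 - 13440*x^12*L^4 + 2688*x^11*L^5 - 448*x^10*L^6 + 64*x^9*L^7 + 9*x^8*L^8) * (x+1)) / ((322560*x^16) * (x+1)) := by
      rw [mul_div_mul_right _ _ (by linarith : x + (1:ℝ) ≠ 0)]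
      field_simp
      ring
    have hexp2 : 1 - ((322560*x^15*L - 161280*x^14*L^2 + 53760*x^13*L^3 - 13440*x^12*L^4 + 2688*x^11*L^5 - 448*x^10*L^6 + 64*x^9*L^7 + 9*x^8*L^8) * (x+1)) / ((322560*x^16) * (x+1)) ≤ Real.exp (-(L/x)) := by
      rw [← hS2]; exact hexp
    have h8 : ((322560*x^15*L - 161280*x^14*L^2 + 53760*x^13*L^3 - 13440*x^12*L^4 + 2688*x^11*L^5 - 448*x^10*L^6 + 64*x^9*L^7 + 9*x^8*L^8) * (x+1)) / ((322560*x^16) * (x+1)) < L / (x+1) := by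
      rw [div_lt_div_iff₀ (mul_pos (mul_pos (by norm_num) (pow_pos hx0 16)) (by linarith)) (by linarith : (0:ℝ) < x+1)]
      have hxp : (0:ℝ) < x + 1 := by linarith
      nlinarith [mul_lt_mul_of_pos_right master hxp]
    have hpos2 : (0:ℝ) < x + 1 - L := by linarith
    rw [Real.rpow_def_of_pos hx0, mul_one_div, lt_div_iff₀ hpos2]
    have hT : x + 1 - L < Real.exp (-(L/x)) * (x+1) := by
      have h6 := mul_le_mul_of_nonneg_right hexp2 (by linarith : (0:ℝ) ≤ x+1)
      have h10 : ((322560*x^15*L - 161280*x^14*L^2 + 53760*x^13*L^3 - 13440*x^12*L^4 + 2688*x^11*L^5 - 448*x^10*L^6 + 64*x^9*L^7 + 9*x^8*L^8) * (x+1)) / ((322560*x^16) * (x+1)) * (x+1) < L := by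
        rw [div_mul_eq_mul_div, div_lt_iff₀ (mul_pos (mul_pos (by norm_num) (pow_pos hx0 16)) (by linarith : (0:ℝ) < x+1))]
        nlinarith [mul_lt_mul_of_pos_right master (show (0:ℝ) < x+1 by linarith)]
      nlinarith [h6, h10]
    calc Real.exp (L/x) * (x + 1 - L)
        < Real.exp (L/x) * (Real.exp (-(L/x)) * (x+1)) := by
          exact mul_lt_mul_of_pos_left hT (Real.exp_pos _)
      _ = x + 1 := by rw [← mul_assoc, ← Real.exp_add]; norm_num
end

section
/- Let F be either of the functions L or R, and set a_F(x) = (F(x) − 1)·x. Then: (a) a_F is strictly decreasing on the interval ((ln π)/2, ∞); (b) a_F(x) tends to (ln π)/2 as x → ∞. -/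
open Real Filter

/-!
Both functions have the form `F x = exp (g x / x)` with `g x = (log π) / 2 + 1 / (a x + b)`,
`a > 0`, `b ≥ 0`. With `φ t = (exp t - 1) / t` (extended by `φ 0 = 1`, i.e. `φ = dslope exp 0`)
we get `(F x - 1) x = φ (g x / x) · g x`. Since `exp` is strictly convex, `φ` is positive and
strictly increasing on `(0, ∞)`, while `g` is positive and antitone and `g x / x` strictly
decreases; hence `a_F` strictly decreases on `(0, ∞)`. As `x → ∞`, `g x / x → 0`, so
`φ (g x / x) → exp' 0 = 1` and `a_F x → lim g = (log π) / 2`.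
-/

open Set

lemma exp_div_sub_one_mul_eq_dslope {x : ℝ} (hx : x ≠ 0) (y : ℝ) :
    (exp (y / x) - 1) * x = dslope exp 0 (y / x) * y := by
  have h := sub_smul_dslope exp 0 (y / x)
  rw [smul_eq_mul, sub_zero, exp_zero] at h
  rw [← h]
  field_simp

lemma dslope_exp_zero_of_ne {t : ℝ} (ht : t ≠ 0) : dslope exp 0 t = (exp t - 1) / t := by
  rw [dslope_of_ne _ ht, slope_def_field, exp_zero, sub_zero]

lemma dslope_exp_zero_pos {t : ℝ} (ht : 0 < t) : 0 < dslope exp 0 t := by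
  rw [dslope_exp_zero_of_ne ht.ne']
  exact div_pos (by linarith [add_one_lt_exp ht.ne']) ht

lemma strictMonoOn_dslope_exp_zero : StrictMonoOn (dslope exp 0) (Ioi 0) := by
  intro s (hs : 0 < s) t (ht : 0 < t) hst
  rw [dslope_exp_zero_of_ne hs.ne', dslope_exp_zero_of_ne ht.ne']
  simpa only [exp_zero, sub_zero] using
    strictConvexOn_exp.secant_strict_mono (mem_univ 0) (mem_univ s) (mem_univ t) hs.ne' ht.ne' hst

lemma strictAntiOn_exp_div_sub_one_mul {g : ℝ → ℝ} (hg : ∀ x ∈ Ioi (0 : ℝ), 0 < g x)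
    (hg_anti : AntitoneOn g (Ioi 0)) :
    StrictAntiOn (fun x => (exp (g x / x) - 1) * x) (Ioi 0) := by
  intro x (hx : 0 < x) y (hy : 0 < y) hxy
  have hgy := hg y hy
  have hgyx : g y ≤ g x := hg_anti hx hy hxy.le
  have hratio : g y / y < g x / x := by
    rw [div_lt_div_iff₀ hy hx]
    nlinarith
  simp only [exp_div_sub_one_mul_eq_dslope hx.ne', exp_div_sub_one_mul_eq_dslope hy.ne']
  exact mul_lt_mul_of_lt_of_le_of_pos_of_nonneg
    (strictMonoOn_dslope_exp_zero (div_pos hgy hy) (div_pos (hg x hx) hx) hratio) hgyx hgy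
    (dslope_exp_zero_pos (div_pos (hg x hx) hx)).le

lemma tendsto_exp_div_sub_one_mul {g : ℝ → ℝ} {c : ℝ} (hg : Tendsto g atTop (nhds c)) :
    Tendsto (fun x => (exp (g x / x) - 1) * x) atTop (nhds c) := by
  have hratio : Tendsto (fun x => g x / x) atTop (nhds 0) := by
    simpa only [div_eq_mul_inv, mul_zero] using hg.mul tendsto_inv_atTop_zero
  have hφ : Tendsto (fun x => dslope exp 0 (g x / x)) atTop (nhds 1) := by
    have hcont : ContinuousAt (dslope exp 0) 0 :=
      continuousAt_dslope_same.2 differentiableAt_exp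
    simpa only [dslope_same, Real.deriv_exp, exp_zero, Function.comp_def] using
      hcont.tendsto.comp hratio
  refine (by simpa only [one_mul] using hφ.mul hg : Tendsto _ atTop (nhds c)).congr' ?_
  filter_upwards [eventually_ne_atTop 0] with x hx
  exact (exp_div_sub_one_mul_eq_dslope hx (g x)).symm

lemma strictAntiOn_and_tendsto_exp_inv_affine {c a b : ℝ} (hc : 0 ≤ c) (ha : 0 < a)
    (hb : 0 ≤ b) :
    StrictAntiOn (fun x => (exp ((c + 1 / (a * x + b)) / x) - 1) * x) (Ioi 0) ∧
    Tendsto (fun x => (exp ((c + 1 / (a * x + b)) / x) - 1) * x) atTop (nhds c) := by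
  refine ⟨strictAntiOn_exp_div_sub_one_mul (fun x (hx : 0 < x) => by positivity) ?_,
    tendsto_exp_div_sub_one_mul ?_⟩
  · intro x (hx : 0 < x) y _ hxy
    show c + 1 / (a * y + b) ≤ c + 1 / (a * x + b)
    gcongr
  · have hlin : Tendsto (fun x => a * x + b) atTop atTop :=
      tendsto_atTop_add_const_right _ b (tendsto_id.const_mul_atTop ha)
    simpa only [one_div, add_zero, Pi.inv_apply] using tendsto_const_nhds.add hlin.inv_tendsto_atTop

lemma pi_rpow_mul_exp_div (x y : ℝ) :
    π ^ (1 / (2 * x)) * exp (y / x) = exp ((log π / 2 + y) / x) := by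
  rw [rpow_def_of_pos pi_pos, ← exp_add]
  ring_nf

lemma L_eq : L = fun x => exp ((log π / 2 + 1 / (12 * x + 1)) / x) := by
  ext x
  rw [L, ← pi_rpow_mul_exp_div, div_div]

lemma R_eq : R = fun x => exp ((log π / 2 + 1 / (12 * x + 0)) / x) := by
  ext x
  rw [R, ← pi_rpow_mul_exp_div, div_div]
  ring_nf

/-- Proposition 3: for `F = L` or `F = R`, the function `a_F(x) = (F(x) − 1)·x` is strictly
decreasing on `((ln π)/2, ∞)` and tends to `(ln π)/2` as `x → ∞`. -/
theorem aF_strictAnti_and_tendsto (F : ℝ → ℝ) (hF : F = L ∨ F = R) :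
    StrictAntiOn (fun x => (F x - 1) * x) (Set.Ioi (Real.log Real.pi / 2)) ∧
    Tendsto (fun x => (F x - 1) * x) atTop (nhds (Real.log Real.pi / 2)) := by
  have hc : 0 ≤ log π / 2 := by
    have := log_pos (by linarith [pi_gt_three] : (1 : ℝ) < π)
    positivity
  obtain ⟨a, b, ha, hb, rfl⟩ : ∃ a b : ℝ, 0 < a ∧ 0 ≤ b ∧
      F = fun x => exp ((log π / 2 + 1 / (a * x + b)) / x) := by
    rcases hF with rfl | rfl
    · exact ⟨12, 1, by norm_num, by norm_num, L_eq⟩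
    · exact ⟨12, 0, by norm_num, le_rfl, R_eq⟩
  obtain ⟨hanti, hlim⟩ := strictAntiOn_and_tendsto_exp_inv_affine hc ha hb
  exact ⟨hanti.mono (Ioi_subset_Ioi hc), hlim⟩
end

section
/- Let s_n = (n+1)·(n+1)^(1/(n+1)) − n·n^(1/n) for integers n ≥ 1. Then: (a) s_n tends to 1 as n → ∞; (b) 2 > s_1 > s_2 > s_3 > ⋯ > 1, i.e., the sequence is strictly decreasing, bounded above by 2, and every term exceeds 1. -/
open Real Filter Set Topology

noncomputable def s (n : ℕ) : ℝ :=
  ((n : ℝ) + 1) * ((n : ℝ) + 1) ^ (1 / ((n : ℝ) + 1)) - (n : ℝ) * (n : ℝ) ^ (1 / (n : ℝ))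

/-!
With `F x = x · x^(1/x)` (`mulSelfRoot`, with derivative `mulSelfRootDeriv`) we have `s n = F (n + 1) - F n`. Here
`F' x = x^(1/x) · (1 + (1 - log x) / x)` and `F'' x = x^(1/x) · ((1 - log x)² - x) / x³`,
which is negative for `x > 1` because `|1 - log x| < √x`. So `F` is strictly concave on `[1, ∞)`
and `s n`, the slope of `F` over `[n, n + 1]`, lies strictly between `F' (n + 1)` and `F' n`.
Since `F'` decreases strictly from `F' 1 = 2` towards its limit `1`, everything follows.
-/

noncomputable def mulSelfRoot (x : ℝ) : ℝ := x * exp (log x / x)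

noncomputable def mulSelfRootDeriv (x : ℝ) : ℝ := exp (log x / x) * (1 + (1 - log x) / x)

lemma mul_rpow_one_div_self {x : ℝ} (hx : 0 ≤ x) : x * x ^ (1 / x) = mulSelfRoot x := by
  rcases hx.eq_or_lt with rfl | hx
  · simp [mulSelfRoot]
  · rw [mulSelfRoot, rpow_def_of_pos hx, mul_one_div]

lemma s_eq_sub (n : ℕ) : s n = mulSelfRoot (n + 1) - mulSelfRoot n := by
  rw [s, mul_rpow_one_div_self (by positivity), mul_rpow_one_div_self n.cast_nonneg]

lemma sq_one_sub_log_lt {x : ℝ} (hx : 1 < x) : (1 - log x) ^ 2 < x := by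
  set t := √(√x)
  have ht : 0 < t := by positivity
  have hlog : log x = 4 * log t := by
    rw [log_sqrt (sqrt_nonneg x), log_sqrt (by linarith)]; ring
  have hsq : t ^ 2 = √x := sq_sqrt (sqrt_nonneg x)
  have hsqrt : 1 < √x := by rwa [lt_sqrt zero_le_one, one_pow]
  refine sq_lt.2 ⟨?_, by linarith [log_pos hx]⟩
  -- `log x = 4 log t ≤ 4 (t - 1) < t² + 1 = √x + 1`
  nlinarith [log_le_sub_one_of_pos ht, sq_nonneg (t - 2)]

lemma hasDerivAt_mulSelfRoot {x : ℝ} (hx : 0 < x) :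
    HasDerivAt mulSelfRoot (mulSelfRootDeriv x) x := by
  have hu : HasDerivAt (fun y => log y / y) _ x :=
    (hasDerivAt_log hx.ne').div (hasDerivAt_id' x) hx.ne'
  refine ((hasDerivAt_id' x).mul hu.exp).congr_deriv ?_
  rw [mulSelfRootDeriv]
  field_simp

lemma hasDerivAt_mulSelfRootDeriv {x : ℝ} (hx : 0 < x) :
    HasDerivAt mulSelfRootDeriv (exp (log x / x) * (((1 - log x) ^ 2 - x) / x ^ 3)) x := by
  have hu : HasDerivAt (fun y => log y / y) _ x :=
    (hasDerivAt_log hx.ne').div (hasDerivAt_id' x) hx.ne'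
  have hv : HasDerivAt (fun y => 1 + (1 - log y) / y) _ x :=
    (((hasDerivAt_log hx.ne').const_sub 1).div (hasDerivAt_id' x) hx.ne').const_add 1
  refine (hu.exp.mul hv).congr_deriv ?_
  field_simp
  ring

lemma strictAntiOn_mulSelfRootDeriv : StrictAntiOn mulSelfRootDeriv (Ici 1) := by
  refine strictAntiOn_of_hasDerivWithinAt_neg (convex_Ici 1)
    (fun x hx => (hasDerivAt_mulSelfRootDeriv (zero_lt_one.trans_le hx)).continuousAt
      |>.continuousWithinAt)
    (fun x hx => (hasDerivAt_mulSelfRootDeriv ?_).hasDerivWithinAt) fun x hx => ?_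
  all_goals rw [interior_Ici] at hx
  · exact zero_lt_one.trans hx
  · have hx0 : 0 < x := zero_lt_one.trans hx
    have hneg : (1 - log x) ^ 2 - x < 0 := sub_neg.2 (sq_one_sub_log_lt hx)
    exact mul_neg_of_pos_of_neg (exp_pos _) (div_neg_of_neg_of_pos hneg (by positivity))

lemma strictConcaveOn_mulSelfRoot : StrictConcaveOn ℝ (Ici 1) mulSelfRoot := by
  refine StrictAntiOn.strictConcaveOn_of_deriv (convex_Ici 1) ?_ ?_
  · exact fun x hx => (hasDerivAt_mulSelfRoot (zero_lt_one.trans_le hx)).continuousAt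
      |>.continuousWithinAt
  · rw [interior_Ici]
    refine (strictAntiOn_mulSelfRootDeriv.mono Ioi_subset_Ici_self).congr fun x hx => ?_
    exact ((hasDerivAt_mulSelfRoot (zero_lt_one.trans hx)).deriv).symm

lemma tendsto_mulSelfRootDeriv_atTop : Tendsto mulSelfRootDeriv atTop (𝓝 1) := by
  have hlog : Tendsto (fun x => log x / x) atTop (𝓝 0) :=
    isLittleO_log_id_atTop.tendsto_div_nhds_zero
  have hrest : Tendsto (fun x => (1 - log x) / x) atTop (𝓝 0) := by
    have h := tendsto_inv_atTop_zero.sub hlog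
    rw [sub_zero] at h
    refine h.congr fun x => ?_
    rw [sub_div, inv_eq_one_div]
  have h := ((continuous_exp.tendsto 0).comp hlog).mul (hrest.const_add 1)
  rwa [exp_zero, add_zero, mul_one] at h

lemma mulSelfRootDeriv_one : mulSelfRootDeriv 1 = 2 := by
  norm_num [mulSelfRootDeriv]

lemma one_lt_mulSelfRootDeriv {x : ℝ} (hx : 1 ≤ x) : 1 < mulSelfRootDeriv x := by
  have hx1 : 1 ≤ x + 1 := by linarith
  refine lt_of_le_of_lt ?_ (strictAntiOn_mulSelfRootDeriv hx hx1 (lt_add_one x))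
  refine le_of_tendsto tendsto_mulSelfRootDeriv_atTop ?_
  filter_upwards [eventually_ge_atTop (x + 1)] with y hy
  exact strictAntiOn_mulSelfRootDeriv.antitoneOn hx1 (hx1.trans hy) hy

lemma s_mem_Ioo {n : ℕ} (hn : 1 ≤ n) :
    s n ∈ Ioo (mulSelfRootDeriv (n + 1)) (mulSelfRootDeriv n) := by
  have hn' : (1 : ℝ) ≤ n := by exact_mod_cast hn
  have hn1 : (1 : ℝ) ≤ n + 1 := by linarith
  have hslope : slope mulSelfRoot n (n + 1) = s n := by
    rw [slope_def_field, s_eq_sub, add_sub_cancel_left, div_one]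
  rw [← hslope]
  exact ⟨strictConcaveOn_mulSelfRoot.lt_slope_of_hasDerivAt hn' hn1 (lt_add_one _)
      (hasDerivAt_mulSelfRoot (by linarith)),
    strictConcaveOn_mulSelfRoot.slope_lt_of_hasDerivAt hn' hn1 (lt_add_one _)
      (hasDerivAt_mulSelfRoot (by linarith))⟩

/-- Theorem 1 (a), (b): for `s_n = (n+1)·(n+1)^(1/(n+1)) − n·n^(1/n)` one has `s_n → 1`,
the sequence is strictly decreasing, `s_n < 2`, and `1 < s_n` for all `n ≥ 1`. -/
theorem s_tendsto_and_strictly_decreasing :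
    Tendsto s atTop (nhds 1) ∧
    (∀ n : ℕ, 1 ≤ n → s (n + 1) < s n) ∧
    (∀ n : ℕ, 1 ≤ n → s n < 2) ∧
    (∀ n : ℕ, 1 ≤ n → 1 < s n) := by
  refine ⟨?_, fun n hn => ?_, fun n hn => ?_, fun n hn => ?_⟩
  · have hcast := tendsto_natCast_atTop_atTop (R := ℝ)
    refine tendsto_of_tendsto_of_tendsto_of_le_of_le'
      (tendsto_mulSelfRootDeriv_atTop.comp (tendsto_atTop_add_const_right _ 1 hcast))
      (tendsto_mulSelfRootDeriv_atTop.comp hcast) ?_ ?_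
    all_goals filter_upwards [eventually_ge_atTop 1] with n hn
    exacts [(s_mem_Ioo hn).1.le, (s_mem_Ioo hn).2.le]
  · have hnext := (s_mem_Ioo (hn.trans n.le_succ)).2
    push_cast at hnext
    exact hnext.trans (s_mem_Ioo hn).1
  · have hn' : (1 : ℝ) ≤ n := by exact_mod_cast hn
    calc s n < mulSelfRootDeriv n := (s_mem_Ioo hn).2
      _ ≤ mulSelfRootDeriv 1 := strictAntiOn_mulSelfRootDeriv.antitoneOn self_mem_Ici hn' hn'
      _ = 2 := mulSelfRootDeriv_one
  · exact (one_lt_mulSelfRootDeriv (le_add_of_nonneg_left n.cast_nonneg)).trans (s_mem_Ioo hn).1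
end

section
/- Let T₁, T₂, T₃, … be a sequence of real numbers with T₁ ≥ 1 satisfying (s.1). Suppose n and m are integers with 2 ≤ m = σ_n < n and σ_{n−m} = σ_{n−m+1} = ⋯ = σ_n. Then n − 1 ≤ T_{n−m} < n ≤ T_{n−m+1} < n + 1 ≤ T_{n−m+2} < n + 2. -/
/-- Lemma 3: let `T₁ ≥ 1` and (s.1) hold, and suppose `2 ≤ m = σ_n < n` with
`σ_{n−m} = ⋯ = σ_n`. Then
`n−1 ≤ T_{n−m} < n ≤ T_{n−m+1} < n+1 ≤ T_{n−m+2} < n+2`. -/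
theorem sigmas_same_values (T : ℕ → ℝ) (hT1 : 1 ≤ T 1)
    (hs1 : ∀ n : ℕ, 1 ≤ n → 1 ≤ T (n + 1) - T n ∧ T (n + 1) - T n < 2)
    (σ : ℕ → ℤ) (hσ : ∀ n : ℕ, σ n = ⌊T n⌋ - n + 1)
    (n m : ℕ) (hm2 : 2 ≤ m) (hmσ : (m : ℤ) = σ n) (hmn : m < n)
    (hsame : ∀ k : ℕ, n - m ≤ k → k ≤ n → σ k = σ n) :
    (n : ℝ) - 1 ≤ T (n - m) ∧ T (n - m) < (n : ℝ) ∧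
    (n : ℝ) ≤ T (n - m + 1) ∧ T (n - m + 1) < (n : ℝ) + 1 ∧
    (n : ℝ) + 1 ≤ T (n - m + 2) ∧ T (n - m + 2) < (n : ℝ) + 2 := by
  have key : ∀ k : ℕ, n - m ≤ k → k ≤ n → ⌊T k⌋ = (k : ℤ) + m - 1 := by
    intro k h1 h2
    have h := hsame k h1 h2
    rw [hσ k, ← hmσ] at h
    omega
  have hcast : ((n - m : ℕ) : ℤ) = (n : ℤ) - m := by omega
  have k0 := key (n - m) le_rfl (by omega)
  have k1 := key (n - m + 1) (by omega) (by omega)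
  have k2 := key (n - m + 2) (by omega) (by omega)
  have e0 : ⌊T (n - m)⌋ = (n : ℤ) - 1 := by push_cast at k0 ⊢; omega
  have e1 : ⌊T (n - m + 1)⌋ = (n : ℤ) := by push_cast at k1 ⊢; omega
  have e2 : ⌊T (n - m + 2)⌋ = (n : ℤ) + 1 := by push_cast at k2 ⊢; omega
  have l0 := Int.floor_le (T (n - m)); have u0 := Int.lt_floor_add_one (T (n - m))
  have l1 := Int.floor_le (T (n - m + 1)); have u1 := Int.lt_floor_add_one (T (n - m + 1))
  have l2 := Int.floor_le (T (n - m + 2)); have u2 := Int.lt_floor_add_one (T (n - m + 2))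
  rw [e0] at l0 u0; rw [e1] at l1 u1; rw [e2] at l2 u2
  push_cast at l0 u0 l1 u1 l2 u2
  refine ⟨by linarith, by linarith, by linarith, by linarith, by linarith, by linarith⟩
end

section
/- Let T₁, T₂, T₃, … be a sequence of real numbers with T₁ ≥ 1 satisfying (s.1) and (s.2) with constant a > 0. Let n ≥ 1 and suppose σ_{n+1} = σ_n + 1. If r ≥ 1 is an integer such that σ_{n+1} = σ_{n+2} = ⋯ = σ_{n+r} and σ_{n+r+1} = σ_{n+r} + 1, then r + 1 > n/a. -/
/-- Proposition 4 (quantitative part): let `T₁ ≥ 1`, (s.1), and (s.2) with constant `a > 0`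
hold. Suppose `σ_{n+1} = σ_n + 1` and `r ≥ 1` satisfies `σ_{n+1} = ⋯ = σ_{n+r}` and
`σ_{n+r+1} = σ_{n+r} + 1`. Then `r + 1 > n/a`. -/
theorem sigma_jump_gap (T : ℕ → ℝ) (hT1 : 1 ≤ T 1)
    (hs1 : ∀ n : ℕ, 1 ≤ n → 1 ≤ T (n + 1) - T n ∧ T (n + 1) - T n < 2)
    (a : ℝ) (ha : 0 < a)
    (hs2 : ∀ n : ℕ, 1 ≤ n → T (n + 1) - T n < 1 + a / n)
    (σ : ℕ → ℤ) (hσ : ∀ n : ℕ, σ n = ⌊T n⌋ - n + 1)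
    (n : ℕ) (hn : 1 ≤ n) (hjump : σ (n + 1) = σ n + 1)
    (r : ℕ) (hr : 1 ≤ r)
    (hconst : ∀ i : ℕ, 1 ≤ i → i ≤ r → σ (n + i) = σ (n + 1))
    (hjump' : σ (n + r + 1) = σ (n + r) + 1) :
    (r : ℝ) + 1 > (n : ℝ) / a := by
  have hn0 : (0 : ℝ) < n := by exact_mod_cast Nat.pos_of_ne_zero (by omega)
  -- Step 1: floor identity
  have hflr : ⌊T (n + r + 1)⌋ = ⌊T n⌋ + r + 3 := by
    have e1 := hjump
    have e2 := hjump'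
    have e3 := hconst r hr le_rfl
    simp only [hσ] at e1 e2 e3
    push_cast at e1 e2 e3
    omega
  -- Step 2: lower bound on T (n+r+1) - T n
  have hlow : (r : ℝ) + 2 < T (n + r + 1) - T n := by
    have h1 : (⌊T (n + r + 1)⌋ : ℝ) ≤ T (n + r + 1) := Int.floor_le _
    have h2 : T n - 1 < (⌊T n⌋ : ℝ) := Int.sub_one_lt_floor _
    have h3 : (⌊T (n + r + 1)⌋ : ℝ) = (⌊T n⌋ : ℝ) + r + 3 := by
      exact_mod_cast congrArg (fun z : ℤ => (z : ℝ)) hflr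
    linarith
  -- Step 3: upper bound via (s.2)
  have key : ∀ m : ℕ, T (n + m + 1) - T n < ((m : ℝ) + 1) * (1 + a / n) := by
    intro m
    induction m with
    | zero =>
      have h := hs2 n hn
      simpa using (by linarith : T (n + 0 + 1) - T n < (1 : ℝ) * (1 + a / n))
    | succ m ih =>
      have h := hs2 (n + m + 1) (by omega)
      push_cast at h
      have hdiv : a / ((n : ℝ) + m + 1) ≤ a / n := by
        apply div_le_div_of_nonneg_left ha.le hn0
        have : (0 : ℝ) ≤ (m : ℝ) := Nat.cast_nonneg m
        linarith
      have hx : (0 : ℝ) < a / n := div_pos ha hn0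
      have expand : ((m : ℝ) + 1 + 1) * (1 + a / n)
          = (1 + a / n) + ((m : ℝ) + 1) * (1 + a / n) := by ring
      push_cast
      show T (n + m + 1 + 1) - T n < ((m : ℝ) + 1 + 1) * (1 + a / n)
      linarith
  have hub := key r
  -- Step 4: conclude
  have expand : ((r : ℝ) + 1) * (1 + a / n) = ((r : ℝ) + 1) + ((r : ℝ) + 1) * a / n := by
    field_simp
  have h1 : 1 < ((r : ℝ) + 1) * a / n := by linarith
  rw [lt_div_iff₀ hn0] at h1
  rw [gt_iff_lt, div_lt_iff₀ ha]
  linarith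
end

section
/- Let T₁, T₂, T₃, … be a sequence of real numbers with T₁ ≥ 1 satisfying (s.1) and (s.2) with constant a > 0. Suppose n₁ ≥ 1 is an integer satisfying σ_{n₁} = σ₁ and σ_{n₁+1} = σ₁ + 1. Then for all integers n > n₁, n > (1 + 1/a)^(σ_n − σ₁ − 1)·(n₁ − a) + a. -/
/-- Corollary 2: let `T₁ ≥ 1`, (s.1), and (s.2) with constant `a > 0` hold. Suppose
`n₁ ≥ 1` satisfies `σ_{n₁} = σ₁` and `σ_{n₁+1} = σ₁ + 1`. Then
`n > (1 + 1/a)^(σ_n − σ₁ − 1)·(n₁ − a) + a` for all `n > n₁`. -/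
theorem sigma_growth (T : ℕ → ℝ) (hT1 : 1 ≤ T 1)
    (hs1 : ∀ n : ℕ, 1 ≤ n → 1 ≤ T (n + 1) - T n ∧ T (n + 1) - T n < 2)
    (a : ℝ) (ha : 0 < a)
    (hs2 : ∀ n : ℕ, 1 ≤ n → T (n + 1) - T n < 1 + a / n)
    (σ : ℕ → ℤ) (hσ : ∀ n : ℕ, σ n = ⌊T n⌋ - n + 1)
    (n₁ : ℕ) (hn₁ : 1 ≤ n₁) (h1 : σ n₁ = σ 1) (h2 : σ (n₁ + 1) = σ 1 + 1) :
    ∀ n : ℕ, n₁ < n →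
      (n : ℝ) > (1 + 1 / a) ^ (σ n - σ 1 - 1) * ((n₁ : ℝ) - a) + a := by
  have hf1 : ∀ i : ℕ, 1 ≤ i → ⌊T i⌋ + 1 ≤ ⌊T (i+1)⌋ := by
    intro i hi
    have h := (hs1 i hi).1
    have hle : ((⌊T i⌋ + 1 : ℤ) : ℝ) ≤ T (i+1) := by
      push_cast
      have := Int.floor_le (T i); linarith
    exact Int.le_floor.mpr hle
  have hf2 : ∀ i : ℕ, 1 ≤ i → ⌊T (i+1)⌋ ≤ ⌊T i⌋ + 2 := by
    intro i hi
    have h := (hs1 i hi).2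
    have hlt : ((⌊T (i+1)⌋ : ℤ) : ℝ) < ((⌊T i⌋ + 3 : ℤ) : ℝ) := by
      push_cast
      have ha1 := Int.floor_le (T (i+1))
      have ha2 := Int.lt_floor_add_one (T i)
      linarith
    have := Int.cast_lt.mp hlt
    omega
  have hstep : ∀ i : ℕ, 1 ≤ i → σ i ≤ σ (i+1) ∧ σ (i+1) ≤ σ i + 1 := by
    intro i hi
    have e1 := hσ i
    have e2 := hσ (i+1)
    have hh1 := hf1 i hi
    have hh2 := hf2 i hi
    push_cast at e2
    omega
  have hmono : ∀ p q : ℕ, 1 ≤ p → p ≤ q → σ p ≤ σ q := by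
    intro p q hp hpq
    induction q, hpq using Nat.le_induction with
    | base => exact le_rfl
    | succ q hq ih => exact le_trans ih (hstep q (le_trans hp hq)).1
  have hC : ∀ p q : ℕ, 1 ≤ p → p ≤ q → ∀ v : ℤ, σ p ≤ v → v < σ q →
      ∃ m : ℕ, p ≤ m ∧ m < q ∧ σ m = v ∧ σ (m+1) = v + 1 := by
    intro p q hp hpq
    induction q, hpq using Nat.le_induction with
    | base => intro v hv1 hv2; omega
    | succ q hq ih =>
      intro v hv1 hv2
      by_cases hcase : v < σ q
      · obtain ⟨m, hm1, hm2, hm3, hm4⟩ := ih v hv1 hcase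
        exact ⟨m, hm1, by omega, hm3, hm4⟩
      · push_neg at hcase
        have hs := (hstep q (le_trans hp hq)).2
        exact ⟨q, hq, by omega, by omega, by omega⟩
  have hS : ∀ p : ℕ, 1 ≤ p → ∀ j : ℕ, p ≤ j →
      T j - j ≤ T p - p + a * ((j:ℝ) - p) / p := by
    intro p hp j hpj
    have hppos : (0:ℝ) < p := by exact_mod_cast hp
    induction j, hpj using Nat.le_induction with
    | base => simp
    | succ j hj ih =>
      have hjpos : (0:ℝ) < j := by
        have : 1 ≤ j := le_trans hp hj
        exact_mod_cast this
      have h2 := hs2 j (le_trans hp hj)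
      have hdiv : a / (j:ℝ) ≤ a / (p:ℝ) := by
        apply div_le_div_of_nonneg_left ha.le hppos
        exact_mod_cast hj
      have heq : a * ((j:ℝ) + 1 - p) / p = a * ((j:ℝ) - p) / p + a / p := by
        field_simp; ring
      push_cast
      linarith
  have hL : ∀ n' m : ℕ, 1 ≤ n' → n' < m →
      σ (n'+1) = σ n' + 1 → σ (m+1) = σ m + 1 →
      (1 + 1/a) * ((n':ℝ) - a) + a < m := by
    intro n' m hn' hnm hj1 hj2
    have hn'pos : (0:ℝ) < n' := by exact_mod_cast hn'
    have hmpos : (0:ℝ) < m := by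
      have : 1 ≤ m := by omega
      exact_mod_cast this
    have hnmR : (n':ℝ) < m := by exact_mod_cast hnm
    have e1 := hσ n'; have e2 := hσ (n'+1); have e3 := hσ m; have e4 := hσ (m+1)
    push_cast at e2 e4
    have jf1 : ⌊T (n'+1)⌋ = ⌊T n'⌋ + 2 := by omega
    have jf2 : ⌊T (m+1)⌋ = ⌊T m⌋ + 2 := by omega
    have hθ1 : T (n'+1) - ⌊T (n'+1)⌋ < a / n' := by
      have h := hs2 n' hn'
      have hfl := Int.lt_floor_add_one (T n')
      have hcast : ((⌊T (n'+1)⌋ : ℤ) : ℝ) = ((⌊T n'⌋ : ℤ) : ℝ) + 2 := by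
        exact_mod_cast jf1
      linarith
    have hθm : 1 - a / m < T m - ⌊T m⌋ := by
      have h := hs2 m (by omega)
      have hfl := Int.floor_le (T (m+1))
      have hcast : ((⌊T (m+1)⌋ : ℤ) : ℝ) = ((⌊T m⌋ : ℤ) : ℝ) + 2 := by
        exact_mod_cast jf2
      linarith
    have hσle : σ (n'+1) ≤ σ m := hmono (n'+1) m (by omega) (by omega)
    have hSm := hS (n'+1) (by omega) m (by omega)
    push_cast at hSm
    have E2 : ((σ (n'+1) : ℤ) : ℝ) = (⌊T (n'+1)⌋ : ℝ) - ((n':ℝ)+1) + 1 := by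
      exact_mod_cast e2
    have E3 : ((σ m : ℤ) : ℝ) = (⌊T m⌋ : ℝ) - (m:ℝ) + 1 := by exact_mod_cast e3
    have hσleR : ((σ (n'+1) : ℤ) : ℝ) ≤ ((σ m : ℤ) : ℝ) := by exact_mod_cast hσle
    have key : 1 - a/m < a/n' + a * ((m:ℝ) - ((n':ℝ)+1)) / ((n':ℝ)+1) := by
      linarith
    have hnum : 0 ≤ a * ((m:ℝ) - ((n':ℝ)+1)) := by
      have : (n':ℝ) + 1 ≤ m := by exact_mod_cast hnm
      nlinarith
    have hd : a * ((m:ℝ) - ((n':ℝ)+1)) / ((n':ℝ)+1) ≤ a * ((m:ℝ) - ((n':ℝ)+1)) / n' :=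
      div_le_div_of_nonneg_left hnum hn'pos (by linarith)
    have key2 : 1 - a/m < a * ((m:ℝ) - n') / n' := by
      have heq : a/n' + a*((m:ℝ) - ((n':ℝ)+1))/n' = a*((m:ℝ) - n')/n' := by
        field_simp; ring
      linarith
    have h3 : (n':ℝ) - a * n' / m < a * ((m:ℝ) - n') := by
      have h3' := (lt_div_iff₀ hn'pos).mp key2
      have heq : (1 - a/m) * (n':ℝ) = (n':ℝ) - a * n' / m := by ring
      linarith
    have h4 : a * (n':ℝ) / m < a := by
      rw [div_lt_iff₀ hmpos]
      nlinarith
    have h5 : (n':ℝ) - a < a * ((m:ℝ) - n') := by linarith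
    have h6 : ((n':ℝ) - a)/a < (m:ℝ) - n' := by
      rw [div_lt_iff₀ ha]
      nlinarith
    have hgoal : (1+1/a) * ((n':ℝ) - a) + a = (n':ℝ) + ((n':ℝ) - a)/a := by
      field_simp; ring
    linarith
  have hb : (0:ℝ) < 1 + 1/a := by positivity
  have hR : ∀ k : ℕ, ∀ m : ℕ, 1 ≤ m → σ m = σ 1 + k → σ (m+1) = σ m + 1 →
      (1 + 1/a)^k * ((n₁:ℝ) - a) + a ≤ m := by
    intro k
    induction k with
    | zero =>
      intro m hm hσm hjm
      have hle : n₁ ≤ m := by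
        by_contra hlt
        push_neg at hlt
        have := hmono (m+1) n₁ (by omega) (by omega)
        push_cast at hσm
        omega
      have : (n₁:ℝ) ≤ m := by exact_mod_cast hle
      simpa using by linarith
    | succ k ih =>
      intro m hm hσm hjm
      have hkz : (0:ℤ) ≤ (k:ℤ) := Int.natCast_nonneg k
      have hvm : (σ 1 + (k:ℤ)) < σ m := by push_cast at hσm; omega
      have hn₁m : n₁ ≤ m := by
        by_contra hc
        push_neg at hc
        have := hmono m n₁ hm hc.le
        omega
      obtain ⟨n', hn'1, hn'2, hn'3, hn'4⟩ :=
        hC n₁ m hn₁ hn₁m (σ 1 + (k:ℤ)) (by omega) hvm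
      have hjump' : σ (n'+1) = σ n' + 1 := by omega
      have ihn' := ih n' (by omega) hn'3 hjump'
      have hLres := hL n' m (by omega) hn'2 hjump' hjm
      have hmul : (1+1/a) * ((1+1/a)^k * ((n₁:ℝ)-a)) ≤ (1+1/a) * ((n':ℝ)-a) := by
        apply mul_le_mul_of_nonneg_left _ hb.le
        linarith
      calc (1+1/a)^(k+1) * ((n₁:ℝ)-a) + a
          = (1+1/a) * ((1+1/a)^k * ((n₁:ℝ)-a)) + a := by ring
        _ ≤ (1+1/a) * ((n':ℝ)-a) + a := by linarith
        _ ≤ m := hLres.le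
  intro n hn
  have hσn : σ 1 + 1 ≤ σ n := by
    have := hmono (n₁+1) n (by omega) (by omega)
    omega
  set k : ℕ := (σ n - σ 1 - 1).toNat with hkdef
  have hkeq : (σ n - σ 1 - 1 : ℤ) = (k:ℤ) := by
    rw [hkdef]; omega
  have hvlt : (σ 1 + (k:ℤ)) < σ n := by omega
  obtain ⟨m, hm1, hm2, hm3, hm4⟩ := hC n₁ n hn₁ hn.le (σ 1 + (k:ℤ)) (by omega) hvlt
  have hRm := hR k m (by omega) hm3 (by omega)
  have hmn : (m:ℝ) + 1 ≤ n := by exact_mod_cast hm2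
  rw [hkeq, zpow_natCast]
  linarith
end

section
/- Let T₁, T₂, T₃, … be a sequence of real numbers with T₁ ≥ 1 satisfying (s.1) and (s.2) with some constant a > 0. Suppose n and m are integers with 2 ≤ m = σ_n < n and the segment σ_{n−m}, …, σ_n takes exactly two values. Then: (a) there exists an integer ℓ with n − m ≤ ℓ < n such that σ_{n−m} = ⋯ = σ_ℓ = m − 1 and σ_{ℓ+1} = ⋯ = σ_n = m; (b) n − 2 ≤ T_{n−m} < n − 1; (c) if ℓ = n − m then n ≤ T_{n−m+1} < n + 1 ≤ T_{n−m+2} < n + 2; (d) if ℓ = n − m + 1 then n − 1 ≤ T_{n−m+1} < n and n + 1 ≤ T_{n−m+2} < n + 2; (e) if ℓ = n − m + 2 then n − 1 ≤ T_{n−m+1} < n ≤ T_{n−m+2} < n + 1 and n + 2 ≤ T_{n−m+3} < n + 3; (f) if ℓ ≥ n − m + 3 then n − 1 ≤ T_{n−m+1} < n ≤ T_{n−m+2} < n + 1 ≤ T_{n−m+3} < n + 2. -/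
/-- Proposition 5: let `T₁ ≥ 1`, (s.1), and (s.2) with constant `a > 0` hold, and suppose
`2 ≤ m = σ_n < n` and the segment `σ_{n−m}, …, σ_n` takes exactly two values. Then there
is `n − m ≤ ℓ < n` with `σ_{n−m} = ⋯ = σ_ℓ = m − 1` and `σ_{ℓ+1} = ⋯ = σ_n = m`,
`n−2 ≤ T_{n−m} < n−1`, and the conclusions (c)–(f) according to the value of `ℓ`. -/
theorem sigmas_two_values (T : ℕ → ℝ) (hT1 : 1 ≤ T 1)
    (hs1 : ∀ n : ℕ, 1 ≤ n → 1 ≤ T (n + 1) - T n ∧ T (n + 1) - T n < 2)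
    (a : ℝ) (ha : 0 < a)
    (hs2 : ∀ n : ℕ, 1 ≤ n → T (n + 1) - T n < 1 + a / n)
    (σ : ℕ → ℤ) (hσ : ∀ n : ℕ, σ n = ⌊T n⌋ - n + 1)
    (n m : ℕ) (hm2 : 2 ≤ m) (hmσ : (m : ℤ) = σ n) (hmn : m < n)
    (htwo : ((Finset.Icc (n - m) n).image σ).card = 2) :
    ∃ ℓ : ℕ, n - m ≤ ℓ ∧ ℓ < n ∧
      (∀ k : ℕ, n - m ≤ k → k ≤ ℓ → σ k = (m : ℤ) - 1) ∧
      (∀ k : ℕ, ℓ + 1 ≤ k → k ≤ n → σ k = (m : ℤ)) ∧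
      ((n : ℝ) - 2 ≤ T (n - m) ∧ T (n - m) < (n : ℝ) - 1) ∧
      (ℓ = n - m →
        (n : ℝ) ≤ T (n - m + 1) ∧ T (n - m + 1) < (n : ℝ) + 1 ∧
        (n : ℝ) + 1 ≤ T (n - m + 2) ∧ T (n - m + 2) < (n : ℝ) + 2) ∧
      (ℓ = n - m + 1 →
        (n : ℝ) - 1 ≤ T (n - m + 1) ∧ T (n - m + 1) < (n : ℝ) ∧
        (n : ℝ) + 1 ≤ T (n - m + 2) ∧ T (n - m + 2) < (n : ℝ) + 2) ∧
      (ℓ = n - m + 2 →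
        (n : ℝ) - 1 ≤ T (n - m + 1) ∧ T (n - m + 1) < (n : ℝ) ∧
        (n : ℝ) ≤ T (n - m + 2) ∧ T (n - m + 2) < (n : ℝ) + 1 ∧
        (n : ℝ) + 2 ≤ T (n - m + 3) ∧ T (n - m + 3) < (n : ℝ) + 3) ∧
      (n - m + 3 ≤ ℓ →
        (n : ℝ) - 1 ≤ T (n - m + 1) ∧ T (n - m + 1) < (n : ℝ) ∧
        (n : ℝ) ≤ T (n - m + 2) ∧ T (n - m + 2) < (n : ℝ) + 1 ∧
        (n : ℝ) + 1 ≤ T (n - m + 3) ∧ T (n - m + 3) < (n : ℝ) + 2) := by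
  set p := n - m with hpdef
  have hp : p + m = n := by omega
  have hp1 : 1 ≤ p := by omega
  -- step lemma: σ goes up by 0 or 1
  have hstep : ∀ k : ℕ, 1 ≤ k → σ k ≤ σ (k + 1) ∧ σ (k + 1) ≤ σ k + 1 := by
    intro k hk
    obtain ⟨h1, h2⟩ := hs1 k hk
    have hf1 : (⌊T k⌋ : ℝ) ≤ T k := Int.floor_le _
    have hf2 : T k < ⌊T k⌋ + 1 := Int.lt_floor_add_one _
    have hlow : ⌊T k⌋ + 1 ≤ ⌊T (k + 1)⌋ := by
      rw [Int.le_floor]; push_cast; linarith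
    have hhigh : ⌊T (k + 1)⌋ < ⌊T k⌋ + 3 := by
      rw [Int.floor_lt]; push_cast; linarith
    rw [hσ k, hσ (k + 1)]
    push_cast
    omega
  -- monotonicity
  have hmono : ∀ j k : ℕ, 1 ≤ j → j ≤ k → σ j ≤ σ k := by
    intro j k hj hjk
    induction k, hjk using Nat.le_induction with
    | base => exact le_refl _
    | succ k hjk ih =>
      have := hstep k (le_trans hj hjk)
      omega
  -- discrete intermediate value
  have hivt : ∀ k : ℕ, p ≤ k → ∀ v : ℤ, σ p ≤ v → v ≤ σ k →
      ∃ j : ℕ, p ≤ j ∧ j ≤ k ∧ σ j = v := by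
    intro k hk
    induction k, hk using Nat.le_induction with
    | base => intro v h1 h2; exact ⟨p, le_refl _, le_refl _, by omega⟩
    | succ k hpk ih =>
      intro v h1 h2
      by_cases hc : v ≤ σ k
      · obtain ⟨j, hj1, hj2, hj3⟩ := ih v h1 hc
        exact ⟨j, hj1, by omega, hj3⟩
      · have := hstep k (le_trans hp1 hpk)
        exact ⟨k + 1, by omega, le_refl _, by omega⟩
  have hσn : σ n = (m : ℤ) := hmσ.symm
  have hpn : p ≤ n := by omega
  -- image equals the integer interval
  have himg : (Finset.Icc p n).image σ = Finset.Icc (σ p) (σ n) := by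
    apply Finset.Subset.antisymm
    · intro x hx
      simp only [Finset.mem_image, Finset.mem_Icc] at hx ⊢
      obtain ⟨k, ⟨hk1, hk2⟩, rfl⟩ := hx
      exact ⟨hmono p k hp1 hk1, hmono k n (le_trans hp1 hk1) hk2⟩
    · intro v hv
      simp only [Finset.mem_Icc] at hv
      obtain ⟨j, hj1, hj2, hj3⟩ := hivt n hpn v hv.1 hv.2
      simp only [Finset.mem_image, Finset.mem_Icc]
      exact ⟨j, ⟨hj1, hj2⟩, hj3⟩
  have hσp : σ p = (m : ℤ) - 1 := by
    rw [himg, Int.card_Icc] at htwo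
    omega
  -- transition point
  have htrans : ∀ k : ℕ, p ≤ k → σ k = (m : ℤ) →
      ∃ ℓ : ℕ, p ≤ ℓ ∧ ℓ < k ∧ σ ℓ = (m : ℤ) - 1 ∧ σ (ℓ + 1) = (m : ℤ) := by
    intro k hk
    induction k, hk using Nat.le_induction with
    | base => intro h; omega
    | succ k hpk ih =>
      intro h
      by_cases hc : σ k = (m : ℤ)
      · obtain ⟨ℓ, h1, h2, h3, h4⟩ := ih hc
        exact ⟨ℓ, h1, by omega, h3, h4⟩
      · have hs := hstep k (le_trans hp1 hpk)
        have hkp : σ k = (m : ℤ) - 1 := by omega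
        have hkge : p ≤ k := hpk
        exact ⟨k, hkge, by omega, hkp, h⟩
  obtain ⟨ℓ, hℓ1, hℓ2, hℓ3, hℓ4⟩ := htrans n hpn hσn
  -- constancy on both sides
  have hlow : ∀ k : ℕ, p ≤ k → k ≤ ℓ → σ k = (m : ℤ) - 1 := by
    intro k h1 h2
    have a1 := hmono p k hp1 h1
    have a2 := hmono k ℓ (le_trans hp1 h1) h2
    omega
  have hhigh : ∀ k : ℕ, ℓ + 1 ≤ k → k ≤ n → σ k = (m : ℤ) := by
    intro k h1 h2
    have a1 := hmono (ℓ + 1) k (by omega) h1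
    have a2 := hmono k n (by omega) h2
    omega
  -- floor bounds from σ value
  have hTb : ∀ (k : ℕ) (v : ℤ), σ k = v →
      (v : ℝ) + k - 1 ≤ T k ∧ T k < (v : ℝ) + k := by
    intro k v hv
    have hfl : ⌊T k⌋ = v + k - 1 := by
      have := hσ k; omega
    have h1 : (⌊T k⌋ : ℝ) ≤ T k := Int.floor_le _
    have h2 : T k < ⌊T k⌋ + 1 := Int.lt_floor_add_one _
    rw [hfl] at h1 h2
    push_cast at h1 h2
    constructor <;> linarith
  have hpm : (p : ℝ) + (m : ℝ) = (n : ℝ) := by exact_mod_cast congrArg (Nat.cast : ℕ → ℝ) hp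
  refine ⟨ℓ, hℓ1, hℓ2, hlow, hhigh, ?_, ?_, ?_, ?_, ?_⟩
  · -- (b)
    have := hTb p ((m : ℤ) - 1) hσp
    push_cast at this
    constructor <;> linarith [this.1, this.2]
  · -- (c) ℓ = p
    intro hℓ
    have h1 := hTb (p + 1) (m : ℤ) (hhigh (p + 1) (by omega) (by omega))
    have h2 := hTb (p + 2) (m : ℤ) (hhigh (p + 2) (by omega) (by omega))
    push_cast at h1 h2
    exact ⟨by linarith [h1.1], by linarith [h1.2], by linarith [h2.1], by linarith [h2.2]⟩
  · -- (d) ℓ = p + 1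
    intro hℓ
    have h1 := hTb (p + 1) ((m : ℤ) - 1) (hlow (p + 1) (by omega) (by omega))
    have h2 := hTb (p + 2) (m : ℤ) (hhigh (p + 2) (by omega) (by omega))
    push_cast at h1 h2
    exact ⟨by linarith [h1.1], by linarith [h1.2], by linarith [h2.1], by linarith [h2.2]⟩
  · -- (e) ℓ = p + 2
    intro hℓ
    have h1 := hTb (p + 1) ((m : ℤ) - 1) (hlow (p + 1) (by omega) (by omega))
    have h2 := hTb (p + 2) ((m : ℤ) - 1) (hlow (p + 2) (by omega) (by omega))
    have h3 := hTb (p + 3) (m : ℤ) (hhigh (p + 3) (by omega) (by omega))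
    push_cast at h1 h2 h3
    exact ⟨by linarith [h1.1], by linarith [h1.2], by linarith [h2.1], by linarith [h2.2],
      by linarith [h3.1], by linarith [h3.2]⟩
  · -- (f) ℓ ≥ p + 3
    intro hℓ
    have h1 := hTb (p + 1) ((m : ℤ) - 1) (hlow (p + 1) (by omega) (by omega))
    have h2 := hTb (p + 2) ((m : ℤ) - 1) (hlow (p + 2) (by omega) (by omega))
    have h3 := hTb (p + 3) ((m : ℤ) - 1) (hlow (p + 3) (by omega) (by omega))
    push_cast at h1 h2 h3
    exact ⟨by linarith [h1.1], by linarith [h1.2], by linarith [h2.1], by linarith [h2.2],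
      by linarith [h3.1], by linarith [h3.2]⟩
end

section
/- Let a > 1 be a real number. Then there is a unique integer n ≥ 2 satisfying ((n−1)!)^(1/(n−1)) < a ≤ (n!)^(1/n), and this unique n equals n_a, the smallest positive integer k with a^k ≤ k!. -/
open Real Nat

private lemma rpow_le_aux (a : ℝ) (ha : 0 < a) (n : ℕ) (hn : 1 ≤ n) :
    a ≤ ((n ! : ℝ)) ^ (1 / (n : ℝ)) ↔ a ^ n ≤ (n ! : ℝ) := by
  have hn0 : (0:ℝ) < (n:ℝ) := by exact_mod_cast hn
  rw [one_div, Real.le_rpow_inv_iff_of_pos ha.le (by positivity) hn0,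
    Real.rpow_natCast]

private lemma rpow_lt_aux (a : ℝ) (ha : 0 < a) (n : ℕ) (hn : 1 ≤ n) :
    ((n ! : ℝ)) ^ (1 / (n : ℝ)) < a ↔ (n ! : ℝ) < a ^ n := by
  have hn0 : (0:ℝ) < (n:ℝ) := by exact_mod_cast hn
  rw [one_div, Real.rpow_inv_lt_iff_of_pos (by positivity) ha.le hn0,
    Real.rpow_natCast]

/-- The set is upward closed: once `a ^ k ≤ k!` with `k ≥ 1`, it holds for `k+1`. -/
private lemma step_aux (a : ℝ) (ha : 1 < a) (k : ℕ) (hk : 1 ≤ k)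
    (h : a ^ k ≤ (k ! : ℝ)) : a ^ (k + 1) ≤ ((k + 1)! : ℝ) := by
  have ha0 : (0:ℝ) < a := lt_trans one_pos ha
  have hak : a ≤ (k : ℝ) := by
    by_contra hlt
    push_neg at hlt
    have hkk : (k ! : ℝ) ≤ (k : ℝ) ^ k := by
      exact_mod_cast Nat.factorial_le_pow k
    have : (k : ℝ) ^ k < a ^ k := by
      apply pow_lt_pow_left₀ hlt (by positivity) (by omega)
    linarith
  calc a ^ (k + 1) = a ^ k * a := by ring
    _ ≤ (k ! : ℝ) * (k + 1) := by
        apply mul_le_mul h (by linarith) ha0.le (by positivity)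
    _ = ((k + 1)! : ℝ) := by
        rw [Nat.factorial_succ]; push_cast; ring

private lemma mono_aux (a : ℝ) (ha : 1 < a) (k m : ℕ) (hk : 1 ≤ k) (hkm : k ≤ m)
    (h : a ^ k ≤ (k ! : ℝ)) : a ^ m ≤ (m ! : ℝ) := by
  induction m with
  | zero => omega
  | succ n ih =>
    rcases Nat.lt_or_ge k (n + 1) with h1 | h1
    · exact step_aux a ha n (by omega) (ih (by omega))
    · have : k = n + 1 := by omega
      subst this; exact h

/-- `n` satisfies the bracketing condition iff it is the least element of the set. -/
private lemma least_aux (a : ℝ) (ha : 1 < a) (n : ℕ) (hn : 2 ≤ n)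
    (h1 : (((n - 1)! : ℝ)) ^ (1 / ((n : ℝ) - 1)) < a)
    (h2 : a ≤ ((n ! : ℝ)) ^ (1 / (n : ℝ))) :
    IsLeast {k : ℕ | 0 < k ∧ a ^ k ≤ (k ! : ℝ)} n := by
  have ha0 : (0:ℝ) < a := lt_trans one_pos ha
  have hcast : ((n : ℝ) - 1) = ((n - 1 : ℕ) : ℝ) := by
    have : (1:ℕ) ≤ n := by omega
    push_cast [Nat.cast_sub this]; ring
  rw [hcast] at h1
  rw [rpow_lt_aux a ha0 (n-1) (by omega)] at h1
  rw [rpow_le_aux a ha0 n (by omega)] at h2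
  constructor
  · exact ⟨by omega, h2⟩
  · intro k hk
    rcases hk with ⟨hk0, hk1⟩
    by_contra hlt
    push_neg at hlt
    have : a ^ (n - 1) ≤ ((n-1)! : ℝ) :=
      mono_aux a ha k (n-1) hk0 (by omega) hk1
    linarith

/-- Lemma 4: for real `a > 1` there is a unique integer `n ≥ 2` with
`((n−1)!)^(1/(n−1)) < a ≤ (n!)^(1/n)`, and this unique `n` is the smallest positive
integer `k` with `a^k ≤ k!`. -/
theorem exists_unique_n_sub_a (a : ℝ) (ha : 1 < a) :
    (∃! n : ℕ, 2 ≤ n ∧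
      (((n - 1)! : ℝ)) ^ (1 / ((n : ℝ) - 1)) < a ∧ a ≤ ((n ! : ℝ)) ^ (1 / (n : ℝ))) ∧
    (∀ n : ℕ, (2 ≤ n ∧
        (((n - 1)! : ℝ)) ^ (1 / ((n : ℝ) - 1)) < a ∧ a ≤ ((n ! : ℝ)) ^ (1 / (n : ℝ))) →
      IsLeast {k : ℕ | 0 < k ∧ a ^ k ≤ (k ! : ℝ)} n) := by
  have ha0 : (0:ℝ) < a := lt_trans one_pos ha
  -- existence of some n with a^n ≤ n!
  have hex : ∃ m : ℕ, 0 < m ∧ a ^ m ≤ (m ! : ℝ) := by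
    have := (FloorSemiring.tendsto_pow_div_factorial_atTop (K := ℝ) a).eventually
      (gt_mem_nhds (show (0:ℝ) < 1 by norm_num))
    rw [Filter.eventually_atTop] at this
    obtain ⟨N, hN⟩ := this
    refine ⟨N + 1, Nat.succ_pos _, ?_⟩
    have h := hN (N+1) (by omega)
    have hf : (0:ℝ) < ((N+1)! : ℝ) := by positivity
    rw [div_lt_one hf] at h
    exact h.le
  classical
  set P : ℕ → Prop := fun m => 0 < m ∧ a ^ m ≤ (m ! : ℝ) with hP
  have hexP : ∃ m, P m := hex
  set n := Nat.find hexP with hn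
  have hPn : P n := Nat.find_spec hexP
  have hmin : ∀ k < n, ¬ P k := fun k hk => Nat.find_min hexP hk
  have hn2 : 2 ≤ n := by
    rcases Nat.lt_or_ge n 2 with h | h
    · interval_cases n
      · exact absurd hPn.1 (lt_irrefl 0)
      · have := hPn.2
        simp [Nat.factorial] at this
        linarith
    · exact h
  -- n-1 fails
  have hfail : ¬ (a ^ (n-1) ≤ ((n-1)! : ℝ)) := by
    intro hc
    exact hmin (n-1) (by omega) ⟨by omega, hc⟩
  push_neg at hfail
  have hcast : ((n : ℝ) - 1) = ((n - 1 : ℕ) : ℝ) := by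
    have : (1:ℕ) ≤ n := by omega
    push_cast [Nat.cast_sub this]; ring
  have cond : 2 ≤ n ∧ (((n - 1)! : ℝ)) ^ (1 / ((n : ℝ) - 1)) < a ∧
      a ≤ ((n ! : ℝ)) ^ (1 / (n : ℝ)) := by
    refine ⟨hn2, ?_, ?_⟩
    · rw [hcast, rpow_lt_aux a ha0 (n-1) (by omega)]
      exact hfail
    · rw [rpow_le_aux a ha0 n (by omega)]
      exact hPn.2
  constructor
  · refine ⟨n, cond, ?_⟩
    intro m hm
    have hLm := least_aux a ha m hm.1 hm.2.1 hm.2.2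
    have hLn := least_aux a ha n cond.1 cond.2.1 cond.2.2
    exact le_antisymm (hLm.2 hLn.1) (hLn.2 hLm.1)
  · intro m hm
    exact least_aux a ha m hm.1 hm.2.1 hm.2.2
end
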